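/- arXiv:1904.08423 — 7 statements merged into one kernel-verified Lean document; each statement's English description precedes it below -/
import Mathlib

section
/- (Strong maximum principle for scalar elliptic operators, nonnegative zeroth-order coefficient.) Let n ≥ 1 and let U ⊆ ℝⁿ be open and connected. Let L be an elliptic operator on U with continuous coefficients a^{αβ}, b^α, c, and assume c(x) ≥ 0 for all x ∈ U. Let u : U → ℝ be twice continuously differentiable on U with (Lu)(x) ≤ 0 for all x ∈ U. If u attains its supremum over U at some point x₀ ∈ U and u(x₀) ≥ 0, then u is constant on U. -/
/-!
The set `{x ∈ U | u x = M}`, `M = u x₀`, is relatively closed in `U`, so by connectedness it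
suffices to show that it is open. Otherwise some `p` near a maximum point has `u p < M`, and the
smallest Euclidean ball around `p` meeting `{u = M}` touches it at an interior maximum `x₀`, where
`Du(x₀) = 0`. Hopf's lemma contradicts this: for large `λ` the barrier
`v = exp (-λ |x - p|²) - exp (-λ r²)` satisfies `Lv < 0` on the annulus `r²/4 ≤ |x - p|² ≤ r²`,
so for small `δ > 0` the weak maximum principle gives `u + δ v ≤ M` there, with equality at `x₀`;
hence `Du(x₀)` is negative in the direction of `p`. The signs `c ≥ 0` and `M ≥ 0` are what make
the constant `-M` harmless: `L(u + δ v - M) = Lu + δ Lv - c M < 0`.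
-/

/-- The second-order linear differential operator
`(Lu)(x) = -∑_{α,β} a^{αβ}(x) ∂_α ∂_β u(x) + ∑_α b^α(x) ∂_α u(x) + c(x) u(x)`. -/
noncomputable def ellOp {n : ℕ}
    (a : (Fin n → ℝ) → Fin n → Fin n → ℝ)
    (b : (Fin n → ℝ) → Fin n → ℝ)
    (c : (Fin n → ℝ) → ℝ)
    (u : (Fin n → ℝ) → ℝ) (x : Fin n → ℝ) : ℝ :=
  -(∑ α : Fin n, ∑ β : Fin n,
      a x α β * fderiv ℝ (fun y => fderiv ℝ u y (Pi.single β 1)) x (Pi.single α 1))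
    + (∑ α : Fin n, b x α * fderiv ℝ u x (Pi.single α 1)) + c x * u x

open Topology Filter Set

section QuadraticForms

variable {ι : Type*} [Fintype ι]

open scoped MatrixOrder in
lemma exists_gram_of_quadForm_nonneg (A : ι → ι → ℝ) (hsymm : ∀ α β, A α β = A β α)
    (hA : ∀ v : ι → ℝ, 0 ≤ ∑ α, ∑ β, A α β * v α * v β) :
    ∃ B : ι → ι → ℝ, ∀ α β, A α β = ∑ k, B k α * B k β := by
  classical
  have hpsd : (Matrix.of A).PosSemidef := by
    refine .of_dotProduct_mulVec_nonneg (funext₂ fun α β => hsymm β α) fun v => ?_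
    refine (hA v).trans_eq ?_
    simp only [dotProduct, Matrix.mulVec, Matrix.of_apply, Finset.mul_sum]
    exact Finset.sum_congr rfl fun α _ => Finset.sum_congr rfl fun β _ => by
      simp only [Pi.star_apply, star_trivial]; ring
  obtain ⟨B, hB⟩ := CStarAlgebra.nonneg_iff_eq_star_mul_self.mp hpsd.nonneg
  refine ⟨B, fun α β => ?_⟩
  simpa [Matrix.mul_apply] using congrFun₂ hB α β

lemma quadForm_nonneg_of_pos {A : ι → ι → ℝ}
    (hA : ∀ v : ι → ℝ, v ≠ 0 → 0 < ∑ α, ∑ β, A α β * v α * v β) (v : ι → ℝ) :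
    0 ≤ ∑ α, ∑ β, A α β * v α * v β := by
  rcases eq_or_ne v 0 with rfl | hv
  · simp
  · exact (hA v hv).le

lemma sum_sum_mul_nonpos_of_quadForm (A H : ι → ι → ℝ) (hsymm : ∀ α β, A α β = A β α)
    (hA : ∀ v : ι → ℝ, 0 ≤ ∑ α, ∑ β, A α β * v α * v β)
    (hH : ∀ v : ι → ℝ, ∑ α, ∑ β, H α β * v α * v β ≤ 0) :
    ∑ α, ∑ β, A α β * H α β ≤ 0 := by
  obtain ⟨B, hB⟩ := exists_gram_of_quadForm_nonneg A hsymm hA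
  calc ∑ α, ∑ β, A α β * H α β = ∑ α, ∑ β, ∑ k, H α β * B k α * B k β := by
        simp only [hB, Finset.sum_mul]
        exact Finset.sum_congr rfl fun α _ => Finset.sum_congr rfl fun β _ =>
          Finset.sum_congr rfl fun k _ => by ring
    _ = ∑ α, ∑ k, ∑ β, H α β * B k α * B k β :=
        Finset.sum_congr rfl fun α _ => Finset.sum_comm
    _ = ∑ k, ∑ α, ∑ β, H α β * B k α * B k β := Finset.sum_comm
    _ ≤ 0 := Finset.sum_nonpos fun k _ => hH (B k)

lemma sum_sum_apply_single_mul [DecidableEq ι] (Φ : (ι → ℝ) →L[ℝ] (ι → ℝ) →L[ℝ] ℝ) (v w : ι → ℝ) :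
    ∑ α, ∑ β, Φ (Pi.single α 1) (Pi.single β 1) * v α * w β = Φ v w := by
  conv_rhs => rw [pi_eq_sum_univ' v, pi_eq_sum_univ' w]
  simp only [map_sum, map_smul, sum_apply, smul_apply, smul_eq_mul, Finset.mul_sum]
  rw [Finset.sum_comm]
  exact Finset.sum_congr rfl fun α _ => Finset.sum_congr rfl fun β _ => by ring

end QuadraticForms

lemma IsLocalMax.deriv_deriv_nonpos {f : ℝ → ℝ} {x₀ : ℝ} (h : IsLocalMax f x₀)
    (hc : ContinuousAt f x₀) : deriv (deriv f) x₀ ≤ 0 := by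
  -- otherwise the second derivative test makes `x₀` a local minimum too, so `f` is locally constant
  by_contra! hpos
  have hmin := isLocalMin_of_deriv_deriv_pos hpos h.deriv_eq_zero hc
  have hconst : f =ᶠ[𝓝 x₀] fun _ => f x₀ :=
    (hmin.and h).mono fun x hx => le_antisymm hx.2 hx.1
  have hderiv : deriv f =ᶠ[𝓝 x₀] fun _ => 0 :=
    hconst.eventuallyEq_nhds.mono fun x hx => by simp [hx.deriv_eq]
  simp [hderiv.deriv_eq] at hpos

section SecondDerivative

variable {E : Type*} [NormedAddCommGroup E] [NormedSpace ℝ E]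

lemma fderiv_fun_fderiv_apply {f : E → ℝ} {x : E} (hf : DifferentiableAt ℝ (fderiv ℝ f) x)
    (v w : E) : fderiv ℝ (fun y => fderiv ℝ f y v) x w = fderiv ℝ (fderiv ℝ f) x w v := by
  rw [fderiv_clm_apply hf (differentiableAt_const v)]
  simp

lemma ContDiffAt.differentiableAt_fderiv {F : Type*} [NormedAddCommGroup F] [NormedSpace ℝ F]
    {f : E → F} {x : E} (hf : ContDiffAt ℝ 2 f x) : DifferentiableAt ℝ (fderiv ℝ f) x :=
  (hf.fderiv_right (m := 1) (by norm_num)).differentiableAt (by norm_num)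

lemma IsLocalMax.fderiv_fderiv_apply_self_nonpos {f : E → ℝ} {z : E} (h : IsLocalMax f z)
    (hf : ContDiffAt ℝ 2 f z) (v : E) : fderiv ℝ (fderiv ℝ f) z v v ≤ 0 := by
  set ℓ : ℝ → E := fun t => z + t • v
  have hℓ : ∀ t, HasDerivAt ℓ v t := fun t => by
    simpa only [id, one_smul] using ((hasDerivAt_id t).smul_const v).const_add z
  have hℓ0 : ℓ 0 = z := by simp [ℓ]
  have hℓz : Tendsto ℓ (𝓝 0) (𝓝 z) := hℓ0 ▸ (hℓ 0).continuousAt.tendsto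
  have hdiff : ∀ᶠ t in 𝓝 (0 : ℝ), DifferentiableAt ℝ f (ℓ t) :=
    hℓz.eventually <| (hf.eventually (by simp)).mono fun y hy =>
      hy.differentiableAt (by norm_num)
  have hderiv : deriv (f ∘ ℓ) =ᶠ[𝓝 0] fun t => fderiv ℝ f (ℓ t) v :=
    hdiff.mono fun t ht => (ht.hasFDerivAt.comp_hasDerivAt t (hℓ t)).deriv
  have hf' : DifferentiableAt ℝ (fderiv ℝ f) (ℓ 0) := hℓ0 ▸ hf.differentiableAt_fderiv
  have hsecond : deriv (fun t => fderiv ℝ f (ℓ t) v) 0 = fderiv ℝ (fderiv ℝ f) z v v := by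
    rw [← hℓ0, ← fderiv_fun_fderiv_apply hf']
    exact ((hf'.clm_apply (differentiableAt_const v)).hasFDerivAt.comp_hasDerivAt 0 (hℓ 0)).deriv
  rw [← hsecond, ← hderiv.deriv_eq]
  exact (hℓ0 ▸ h : IsLocalMax f (ℓ 0)).comp_continuous (hℓ 0).continuousAt
    |>.deriv_deriv_nonpos (hf.continuousAt.comp_of_eq (hℓ 0).continuousAt hℓ0)

end SecondDerivative

section EllipticOperator

variable {n : ℕ} (a : (Fin n → ℝ) → Fin n → Fin n → ℝ) (b : (Fin n → ℝ) → Fin n → ℝ)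
  (c : (Fin n → ℝ) → ℝ)

lemma ellOp_eq_of_differentiableAt {u : (Fin n → ℝ) → ℝ} {x : Fin n → ℝ}
    (hu : DifferentiableAt ℝ (fderiv ℝ u) x) :
    ellOp a b c u x = -(∑ α, ∑ β, a x α β * fderiv ℝ (fderiv ℝ u) x (Pi.single α 1) (Pi.single β 1))
      + (∑ α, b x α * fderiv ℝ u x (Pi.single α 1)) + c x * u x := by
  simp only [ellOp, fderiv_fun_fderiv_apply hu]

lemma IsLocalMax.mul_le_ellOp {w : (Fin n → ℝ) → ℝ} {z : Fin n → ℝ} (hmax : IsLocalMax w z)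
    (hw : ContDiffAt ℝ 2 w z) (hsymm : ∀ α β, a z α β = a z β α)
    (hpsd : ∀ v : Fin n → ℝ, 0 ≤ ∑ α, ∑ β, a z α β * v α * v β) :
    c z * w z ≤ ellOp a b c w z := by
  have hhess : ∑ α, ∑ β, a z α β * fderiv ℝ (fderiv ℝ w) z (Pi.single α 1) (Pi.single β 1) ≤ 0 :=
    sum_sum_mul_nonpos_of_quadForm _ _ hsymm hpsd fun v => by
      rw [sum_sum_apply_single_mul]
      exact hmax.fderiv_fderiv_apply_self_nonpos hw v
  rw [ellOp_eq_of_differentiableAt a b c hw.differentiableAt_fderiv, hmax.fderiv_eq_zero]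
  simp only [zero_apply, mul_zero, Finset.sum_const_zero, add_zero]
  linarith

lemma ellOp_add {u v : (Fin n → ℝ) → ℝ} {x : Fin n → ℝ} (hu : ContDiffAt ℝ 2 u x)
    (hv : ContDiffAt ℝ 2 v x) :
    ellOp a b c (u + v) x = ellOp a b c u x + ellOp a b c v x := by
  have hu' := hu.differentiableAt_fderiv
  have hv' := hv.differentiableAt_fderiv
  have hD : fderiv ℝ (u + v) =ᶠ[𝓝 x] fderiv ℝ u + fderiv ℝ v := by
    filter_upwards [hu.eventually (by simp), hv.eventually (by simp)] with y hyu hyv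
    exact fderiv_add (hyu.differentiableAt (by norm_num)) (hyv.differentiableAt (by norm_num))
  have hD2 : fderiv ℝ (fderiv ℝ (u + v)) x = fderiv ℝ (fderiv ℝ u) x + fderiv ℝ (fderiv ℝ v) x := by
    rw [hD.fderiv_eq, fderiv_add hu' hv']
  rw [ellOp_eq_of_differentiableAt a b c ((hu'.add hv').congr_of_eventuallyEq hD),
    ellOp_eq_of_differentiableAt a b c hu', ellOp_eq_of_differentiableAt a b c hv', hD2,
    hD.eq_of_nhds]
  simp only [add_apply, Pi.add_apply, mul_add, Finset.sum_add_distrib]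
  ring

lemma ellOp_const_smul (k : ℝ) (u : (Fin n → ℝ) → ℝ) (x : Fin n → ℝ) :
    ellOp a b c (k • u) x = k * ellOp a b c u x := by
  have hD2 (g : (Fin n → ℝ) → ℝ) : fderiv ℝ (fun y => k * g y) x = k • fderiv ℝ g x :=
    congrFun (fderiv_const_smul_field k) x
  simp only [ellOp, fderiv_const_smul_field, smul_apply, smul_eq_mul, Pi.smul_apply, hD2]
  simp only [mul_add, mul_neg, Finset.mul_sum, mul_left_comm k]

lemma ellOp_sub_const (k : ℝ) (u : (Fin n → ℝ) → ℝ) (x : Fin n → ℝ) :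
    ellOp a b c (fun y => u y - k) x = ellOp a b c u x - c x * k := by
  simp only [ellOp, fderiv_sub_const]
  ring

end EllipticOperator

section HopfBarrier

variable {n : ℕ}

/-- `Fin n → ℝ` carries the sup norm, so Euclidean balls are described through this function. -/
def euclSqDist (p x : Fin n → ℝ) : ℝ := ∑ i, (x i - p i) ^ 2

lemma euclSqDist_nonneg (p x : Fin n → ℝ) : 0 ≤ euclSqDist p x :=
  Finset.sum_nonneg fun _ _ => sq_nonneg _

lemma euclSqDist_comm (p x : Fin n → ℝ) : euclSqDist p x = euclSqDist x p :=
  Finset.sum_congr rfl fun _ _ => by ring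

@[simp]
lemma euclSqDist_self (p : Fin n → ℝ) : euclSqDist p p = 0 := by
  simp [euclSqDist]

lemma euclSqDist_eq_zero_iff {p x : Fin n → ℝ} : euclSqDist p x = 0 ↔ x = p := by
  rw [euclSqDist, Finset.sum_eq_zero_iff_of_nonneg fun _ _ => sq_nonneg _]
  simp [sub_eq_zero, funext_iff]

lemma euclSqDist_le_two_mul_add (y p x : Fin n → ℝ) :
    euclSqDist y x ≤ 2 * (euclSqDist y p + euclSqDist p x) := by
  simp only [euclSqDist, Finset.mul_sum, ← Finset.sum_add_distrib]
  exact Finset.sum_le_sum fun i _ => by nlinarith [sq_nonneg (p i - y i - (x i - p i))]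

lemma euclSqDist_add_smul_sub (p x : Fin n → ℝ) (t : ℝ) :
    euclSqDist p (x + t • (p - x)) = (1 - t) ^ 2 * euclSqDist p x := by
  simp only [euclSqDist, Finset.mul_sum, Pi.add_apply, Pi.smul_apply, Pi.sub_apply, smul_eq_mul]
  exact Finset.sum_congr rfl fun _ _ => by ring

lemma dist_sq_le_euclSqDist (p x : Fin n → ℝ) : dist x p ^ 2 ≤ euclSqDist p x := by
  rw [← Real.le_sqrt dist_nonneg (euclSqDist_nonneg p x), dist_pi_le_iff (Real.sqrt_nonneg _)]
  exact fun i => Real.abs_le_sqrt <|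
    Finset.single_le_sum (f := fun j => (x j - p j) ^ 2) (fun _ _ => sq_nonneg _)
      (Finset.mem_univ i)

lemma contDiff_euclSqDist (p : Fin n → ℝ) : ContDiff ℝ 2 (euclSqDist p) := by
  unfold euclSqDist
  fun_prop

lemma continuous_euclSqDist (p : Fin n → ℝ) : Continuous (euclSqDist p) :=
  (contDiff_euclSqDist p).continuous

lemma isCompact_euclSqDist_le (p : Fin n → ℝ) (r : ℝ) :
    IsCompact {x | euclSqDist p x ≤ r} := by
  refine Metric.isCompact_of_isClosed_isBounded
    (isClosed_le (continuous_euclSqDist p) continuous_const)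
    ((Metric.isBounded_closedBall (x := p) (r := √r)).subset fun x hx => ?_)
  exact (le_abs_self _).trans (Real.abs_le_sqrt ((dist_sq_le_euclSqDist p x).trans hx))

lemma isCompact_euclSqDist_preimage_Icc (p : Fin n → ℝ) (r₁ r₂ : ℝ) :
    IsCompact (euclSqDist p ⁻¹' Icc r₁ r₂) :=
  (isCompact_euclSqDist_le p r₂).of_isClosed_subset
    (isClosed_Icc.preimage (continuous_euclSqDist p)) fun _ hx => hx.2

lemma hasFDerivAt_euclSqDist (p x : Fin n → ℝ) :
    HasFDerivAt (euclSqDist p)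
      (∑ i, (2 * (x i - p i)) • ContinuousLinearMap.proj (R := ℝ) (φ := fun _ => ℝ) i) x := by
  refine HasFDerivAt.fun_sum fun i _ => ?_
  refine ((((ContinuousLinearMap.proj (R := ℝ) (φ := fun _ : Fin n => ℝ) i).hasFDerivAt
    (x := x)).sub_const (p i)).pow 2).congr_fderiv ?_
  simp [ContinuousLinearMap.proj_apply]

noncomputable def hopfBarrier (p : Fin n → ℝ) (lam r : ℝ) (x : Fin n → ℝ) : ℝ :=
  Real.exp (-lam * euclSqDist p x) - Real.exp (-lam * r)

lemma contDiff_hopfBarrier (p : Fin n → ℝ) (lam r : ℝ) : ContDiff ℝ 2 (hopfBarrier p lam r) := by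
  unfold hopfBarrier
  have := contDiff_euclSqDist p
  fun_prop

lemma hopfBarrier_le_exp (p : Fin n → ℝ) (lam r : ℝ) (x : Fin n → ℝ) :
    hopfBarrier p lam r x ≤ Real.exp (-lam * euclSqDist p x) :=
  sub_le_self _ (Real.exp_pos _).le

lemma fderiv_hopfBarrier_apply (p : Fin n → ℝ) (lam r : ℝ) (x h : Fin n → ℝ) :
    fderiv ℝ (hopfBarrier p lam r) x h =
      -2 * lam * Real.exp (-lam * euclSqDist p x) * ∑ i, (x i - p i) * h i := by
  have hD : HasFDerivAt (hopfBarrier p lam r) _ x :=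
    (((hasFDerivAt_euclSqDist p x).const_mul (-lam)).exp).sub_const _
  rw [hD.fderiv]
  simp only [smul_apply, sum_apply, ContinuousLinearMap.proj_apply, smul_eq_mul, Finset.mul_sum]
  exact Finset.sum_congr rfl fun _ _ => by ring

lemma hopfBarrier_le_one (p : Fin n → ℝ) {lam : ℝ} (hlam : 0 ≤ lam) (r : ℝ) (x : Fin n → ℝ) :
    hopfBarrier p lam r x ≤ 1 :=
  (hopfBarrier_le_exp p lam r x).trans <| Real.exp_le_one_iff.2 <|
    mul_nonpos_of_nonpos_of_nonneg (neg_nonpos.2 hlam) (euclSqDist_nonneg p x)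

lemma hopfBarrier_of_euclSqDist_eq {p x : Fin n → ℝ} {lam r : ℝ} (hx : euclSqDist p x = r) :
    hopfBarrier p lam r x = 0 := by
  simp [hopfBarrier, hx]

lemma fderiv_hopfBarrier_apply_single (p : Fin n → ℝ) (lam r : ℝ) (β : Fin n) :
    (fun y => fderiv ℝ (hopfBarrier p lam r) y (Pi.single β 1)) =
      fun y => -2 * lam * Real.exp (-lam * euclSqDist p y) * (y β - p β) := by
  ext y
  simp [fderiv_hopfBarrier_apply, Pi.single_apply]

lemma fderiv_fderiv_hopfBarrier_apply_single (p : Fin n → ℝ) (lam r : ℝ) (x : Fin n → ℝ)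
    (α β : Fin n) :
    fderiv ℝ (fun y => fderiv ℝ (hopfBarrier p lam r) y (Pi.single β 1)) x (Pi.single α 1) =
      2 * lam * Real.exp (-lam * euclSqDist p x) *
        (2 * lam * (x α - p α) * (x β - p β) - (Pi.single α 1 : Fin n → ℝ) β) := by
  have hE := ((hasFDerivAt_euclSqDist p x).const_mul (-lam)).exp
  have hβ := (ContinuousLinearMap.proj (R := ℝ) (φ := fun _ : Fin n => ℝ) β).hasFDerivAt
    (x := x) |>.sub_const (p β)
  have hD : HasFDerivAt (fun y => -2 * lam * Real.exp (-lam * euclSqDist p y) * (y β - p β)) _ x :=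
    (hE.const_mul (-2 * lam)).fun_mul hβ
  rw [fderiv_hopfBarrier_apply_single, hD.fderiv]
  simp only [add_apply, smul_apply, sum_apply, ContinuousLinearMap.proj_apply, smul_eq_mul,
    Pi.single_apply, mul_ite, mul_one, mul_zero, Finset.sum_ite_eq', Finset.mem_univ, if_true]
  split_ifs <;> ring

variable (a : (Fin n → ℝ) → Fin n → Fin n → ℝ) (b : (Fin n → ℝ) → Fin n → ℝ)
  (c : (Fin n → ℝ) → ℝ)

lemma ellOp_hopfBarrier (p : Fin n → ℝ) (lam r : ℝ) (x : Fin n → ℝ) :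
    ellOp a b c (hopfBarrier p lam r) x =
      2 * lam * Real.exp (-lam * euclSqDist p x) *
        (-2 * lam * ∑ α, ∑ β, a x α β * (x α - p α) * (x β - p β) + ∑ α, a x α α
          - ∑ α, b x α * (x α - p α)) + c x * hopfBarrier p lam r x := by
  set E := Real.exp (-lam * euclSqDist p x)
  have hsecond : ∑ α, ∑ β, a x α β * (2 * lam * E *
      (2 * lam * (x α - p α) * (x β - p β) - (Pi.single α 1 : Fin n → ℝ) β)) =
      2 * lam * E * (2 * lam * ∑ α, ∑ β, a x α β * (x α - p α) * (x β - p β) - ∑ α, a x α α) := by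
    have hdiag (α : Fin n) : ∑ β, a x α β * (Pi.single α 1 : Fin n → ℝ) β = a x α α := by
      simp [Pi.single_apply]
    calc _ = ∑ α, (2 * lam * E * (2 * lam * ∑ β, a x α β * (x α - p α) * (x β - p β))
          - 2 * lam * E * ∑ β, a x α β * (Pi.single α 1 : Fin n → ℝ) β) := by
          refine Finset.sum_congr rfl fun α _ => ?_
          simp only [Finset.mul_sum, ← Finset.sum_sub_distrib]
          exact Finset.sum_congr rfl fun β _ => by ring
      _ = _ := by simp only [hdiag, Finset.sum_sub_distrib, ← Finset.mul_sum, mul_sub]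
  have hfirst : ∑ α, b x α * (-2 * lam * E * ∑ i, (x i - p i) * (Pi.single α 1 : Fin n → ℝ) i) =
      -(2 * lam * E * ∑ α, b x α * (x α - p α)) := by
    have hcoord (α : Fin n) : ∑ i, (x i - p i) * (Pi.single α 1 : Fin n → ℝ) i = x α - p α := by
      simp [Pi.single_apply]
    simp only [hcoord, Finset.mul_sum, ← Finset.sum_neg_distrib]
    exact Finset.sum_congr rfl fun α _ => by ring
  rw [ellOp]
  simp only [fderiv_fderiv_hopfBarrier_apply_single]
  simp only [fderiv_hopfBarrier_apply]
  rw [hsecond, hfirst]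
  ring

lemma ellOp_hopfBarrier_neg {p : Fin n → ℝ} {lam r θ C : ℝ} {x : Fin n → ℝ} (hc : 0 ≤ c x)
    (hθ : θ ≤ ∑ α, ∑ β, a x α β * (x α - p α) * (x β - p β))
    (hC : ∑ α, a x α α - ∑ α, b x α * (x α - p α) + c x ≤ C)
    (hlam : 1 ≤ lam) (hlamC : C < 2 * lam * θ) :
    ellOp a b c (hopfBarrier p lam r) x < 0 := by
  set E := Real.exp (-lam * euclSqDist p x)
  have hE : 0 < E := Real.exp_pos _
  have hcE : c x * hopfBarrier p lam r x ≤ 2 * lam * E * c x :=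
    calc c x * hopfBarrier p lam r x ≤ c x * E :=
          mul_le_mul_of_nonneg_left (hopfBarrier_le_exp p lam r x) hc
      _ ≤ 2 * lam * E * c x := by nlinarith [mul_nonneg hc hE.le]
  rw [ellOp_hopfBarrier]
  calc _ ≤ 2 * lam * E * ((∑ α, a x α α - ∑ α, b x α * (x α - p α) + c x)
          - 2 * lam * ∑ α, ∑ β, a x α β * (x α - p α) * (x β - p β)) := by linarith
    _ ≤ 2 * lam * E * (C - 2 * lam * θ) := by gcongr
    _ < 0 := mul_neg_of_pos_of_neg (by positivity) (by linarith)

lemma exists_ellOp_hopfBarrier_neg {K : Set (Fin n → ℝ)} (hK : IsCompact K) {p : Fin n → ℝ}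
    (hp : p ∉ K) (ha_cont : ∀ α β, ContinuousOn (fun x => a x α β) K)
    (hb_cont : ∀ α, ContinuousOn (fun x => b x α) K) (hc_cont : ContinuousOn c K)
    (ha_pos : ∀ x ∈ K, ∀ v : Fin n → ℝ, v ≠ 0 → 0 < ∑ α, ∑ β, a x α β * v α * v β)
    (hc : ∀ x ∈ K, 0 ≤ c x) (r : ℝ) :
    ∃ lam, 0 < lam ∧ ∀ x ∈ K, ellOp a b c (hopfBarrier p lam r) x < 0 := by
  obtain ⟨θ, hθ, hθle⟩ := hK.exists_forall_le'
    (f := fun x => ∑ α, ∑ β, a x α β * (x α - p α) * (x β - p β)) (by fun_prop)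
    fun x hx => by simpa using ha_pos x hx (x - p) (sub_ne_zero.2 (ne_of_mem_of_not_mem hx hp))
  obtain ⟨C, hC⟩ := hK.bddAbove_image
    (f := fun x => ∑ α, a x α α - ∑ α, b x α * (x α - p α) + c x) (by fun_prop)
  have hlamθ : C ≤ max 1 (C / θ) * θ := (div_le_iff₀ hθ).1 (le_max_right _ _)
  refine ⟨max 1 (C / θ), by positivity, fun x hx => ?_⟩
  refine ellOp_hopfBarrier_neg a b c (hc x hx) (hθle x hx) (hC ⟨x, hx, rfl⟩) (le_max_left _ _) ?_
  nlinarith [mul_pos (lt_of_lt_of_le one_pos (le_max_left 1 (C / θ))) hθ]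

end HopfBarrier

section Hopf

variable {n : ℕ} {a : (Fin n → ℝ) → Fin n → Fin n → ℝ} {b : (Fin n → ℝ) → Fin n → ℝ}
  {c : (Fin n → ℝ) → ℝ}

lemma nonpos_of_ellOp_neg {K : Set (Fin n → ℝ)} (hK : IsCompact K) {w : (Fin n → ℝ) → ℝ}
    (hw : ∀ x ∈ interior K, ContDiffAt ℝ 2 w x) (hwK : ContinuousOn w K)
    (ha_symm : ∀ x ∈ interior K, ∀ α β, a x α β = a x β α)
    (ha_psd : ∀ x ∈ interior K, ∀ v : Fin n → ℝ, 0 ≤ ∑ α, ∑ β, a x α β * v α * v β)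
    (hc : ∀ x ∈ interior K, 0 ≤ c x) (hLw : ∀ x ∈ interior K, ellOp a b c w x < 0)
    (hfr : ∀ x ∈ frontier K, w x ≤ 0) :
    ∀ x ∈ K, w x ≤ 0 := by
  intro x hx
  by_contra! hpos
  obtain ⟨z, hzK, hzmax⟩ := hK.exists_isMaxOn ⟨x, hx⟩ hwK
  have hz : 0 < w z := hpos.trans_le (hzmax hx)
  have hzint : z ∈ interior K := self_sdiff_frontier K ▸ ⟨hzK, fun h => (hfr z h).not_gt hz⟩
  have hle := (hzmax.isLocalMax (mem_interior_iff_mem_nhds.1 hzint)).mul_le_ellOp a b c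
    (hw z hzint) (ha_symm z hzint) (ha_psd z hzint)
  nlinarith [hLw z hzint, mul_nonneg (hc z hzint) hz.le]


variable {U : Set (Fin n → ℝ)} (hU : IsOpen U)
  (ha_cont : ∀ α β, ContinuousOn (fun x => a x α β) U)
  (hb_cont : ∀ α, ContinuousOn (fun x => b x α) U) (hc_cont : ContinuousOn c U)
  (ha_symm : ∀ x ∈ U, ∀ α β, a x α β = a x β α)
  (ha_pos : ∀ x ∈ U, ∀ v : Fin n → ℝ, v ≠ 0 → 0 < ∑ α, ∑ β, a x α β * v α * v β)
  (hc : ∀ x ∈ U, 0 ≤ c x) {u : (Fin n → ℝ) → ℝ} (hu : ContDiffOn ℝ 2 u U)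
  (hLu : ∀ x ∈ U, ellOp a b c u x ≤ 0)
include hU ha_symm ha_pos hc hu hLu

lemma add_smul_hopfBarrier_le {M : ℝ} (hM : 0 ≤ M) {p : Fin n → ℝ} {lam r δ : ℝ} (hr : 0 < r)
    (hlam : 0 ≤ lam) (hδ : 0 < δ) (hball : ∀ x, euclSqDist p x ≤ r → x ∈ U)
    (hLbar : ∀ x, euclSqDist p x ∈ Icc (r / 4) r → ellOp a b c (hopfBarrier p lam r) x < 0)
    (hinner : ∀ x, euclSqDist p x = r / 4 → u x + δ ≤ M)
    (houter : ∀ x, euclSqDist p x = r → u x ≤ M) :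
    ∀ x, euclSqDist p x ∈ Icc (r / 4) r → u x + δ * hopfBarrier p lam r x ≤ M := by
  set A := euclSqDist p ⁻¹' Icc (r / 4) r
  have hAU : A ⊆ U := fun x hx => hball x hx.2
  have hA : IsCompact A := isCompact_euclSqDist_preimage_Icc p _ _
  set w := fun y => (u + δ • hopfBarrier p lam r) y - M
  have hbarC {x : Fin n → ℝ} : ContDiffAt ℝ 2 (δ • hopfBarrier p lam r) x :=
    ((contDiff_hopfBarrier p lam r).const_smul δ).contDiffAt
  have hwC : ∀ x ∈ U, ContDiffAt ℝ 2 w x := fun x hx =>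
    ((hu.contDiffAt (hU.mem_nhds hx)).add hbarC).sub contDiffAt_const
  have hw : ∀ x ∈ A, w x ≤ 0 := by
    refine nonpos_of_ellOp_neg (a := a) (b := b) (c := c) hA
      (fun x hx => hwC x (hAU (interior_subset hx)))
      (fun x hx => (hwC x (hAU hx)).continuousAt.continuousWithinAt)
      (fun x hx => ha_symm x (hAU (interior_subset hx)))
      (fun x hx => quadForm_nonneg_of_pos (ha_pos x (hAU (interior_subset hx))))
      (fun x hx => hc x (hAU (interior_subset hx))) (fun x hx => ?_) (fun x hx => ?_)
    · have hxU := hAU (interior_subset hx)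
      rw [ellOp_sub_const, ellOp_add a b c (hu.contDiffAt (hU.mem_nhds hxU)) hbarC,
        ellOp_const_smul]
      nlinarith [hLu x hxU, mul_nonneg (hc x hxU) hM,
        mul_pos hδ (neg_pos.2 (hLbar x (interior_subset (s := A) hx)))]
    · have hx' := (continuous_euclSqDist p).frontier_preimage_subset _ hx
      rw [frontier_Icc (by linarith)] at hx'
      simp only [w, Pi.add_apply, Pi.smul_apply, smul_eq_mul]
      rcases hx' with hx' | hx'
      · linarith [hinner x hx', mul_le_mul_of_nonneg_left (hopfBarrier_le_one p hlam r x) hδ.le]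
      · simp [hopfBarrier_of_euclSqDist_eq hx', houter x hx']
  exact fun x hx => by simpa [w] using hw x hx

include ha_cont hb_cont hc_cont

lemma exists_add_smul_hopfBarrier_le {M : ℝ} (hM : 0 ≤ M) {p : Fin n → ℝ} {r : ℝ} (hr : 0 < r)
    (hball : ∀ x, euclSqDist p x ≤ r → x ∈ U) (hle : ∀ x, euclSqDist p x ≤ r → u x ≤ M)
    (hlt : ∀ x, euclSqDist p x < r → u x < M) :
    ∃ δ > 0, ∃ lam > 0, ∀ x, euclSqDist p x ∈ Icc (r / 4) r →
      u x + δ * hopfBarrier p lam r x ≤ M := by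
  set A := euclSqDist p ⁻¹' Icc (r / 4) r
  have hAU : A ⊆ U := fun x hx => hball x hx.2
  have hA : IsCompact A := isCompact_euclSqDist_preimage_Icc p _ _
  have hpA : p ∉ A := fun h => by linarith [h.1, euclSqDist_self p]
  obtain ⟨lam, hlam, hLbar⟩ := exists_ellOp_hopfBarrier_neg a b c hA hpA
    (fun α β => (ha_cont α β).mono hAU) (fun α => (hb_cont α).mono hAU) (hc_cont.mono hAU)
    (fun x hx => ha_pos x (hAU hx)) (fun x hx => hc x (hAU hx)) r
  obtain ⟨m, hm, hmmax⟩ := (isCompact_euclSqDist_le p (r / 4)).exists_isMaxOn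
    ⟨p, show euclSqDist p p ≤ r / 4 by simp only [euclSqDist_self]; positivity⟩
    (hu.continuousOn.mono fun x (hx : euclSqDist p x ≤ r / 4) => hball x (by linarith))
  have hm : u m < M := hlt m (by linarith [show euclSqDist p m ≤ r / 4 from hm])
  refine ⟨M - u m, sub_pos.2 hm, lam, hlam, add_smul_hopfBarrier_le hU ha_symm ha_pos hc hu hLu
    hM hr hlam.le (sub_pos.2 hm) hball hLbar (fun x hx => ?_) (fun x hx => hle x hx.le)⟩
  have hux : u x ≤ u m := hmmax (show euclSqDist p x ≤ r / 4 from hx.le)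
  linarith

theorem hopf_lemma {M : ℝ} (hM : 0 ≤ M) {p x₀ : Fin n → ℝ} (hx₀p : x₀ ≠ p)
    (hball : ∀ x, euclSqDist p x ≤ euclSqDist p x₀ → x ∈ U)
    (hle : ∀ x, euclSqDist p x ≤ euclSqDist p x₀ → u x ≤ M)
    (hlt : ∀ x, euclSqDist p x < euclSqDist p x₀ → u x < M) (hx₀ : u x₀ = M) :
    fderiv ℝ u x₀ (p - x₀) < 0 := by
  set r := euclSqDist p x₀
  have hr : 0 < r := (euclSqDist_nonneg p x₀).lt_of_ne' (euclSqDist_eq_zero_iff.not.2 hx₀p)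
  obtain ⟨δ, hδ, lam, hlam, hcomp⟩ := exists_add_smul_hopfBarrier_le hU ha_cont hb_cont hc_cont
    ha_symm ha_pos hc hu hLu hM hr hball hle hlt
  set w := fun y => u y + δ * hopfBarrier p lam r y
  have hbar₀ : hopfBarrier p lam r x₀ = 0 := hopfBarrier_of_euclSqDist_eq rfl
  have hmax : IsMaxOn w (euclSqDist p ⁻¹' Icc (r / 4) r) x₀ := fun x hx => by
    simpa [w, hbar₀, hx₀] using hcomp x hx
  have hseg : segment ℝ x₀ (x₀ + (1 / 2 : ℝ) • (p - x₀)) ⊆ euclSqDist p ⁻¹' Icc (r / 4) r := by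
    rw [segment_eq_image']
    rintro _ ⟨t, ⟨ht₀, ht₁⟩, rfl⟩
    simp only [add_sub_cancel_left, smul_smul, mem_preimage, euclSqDist_add_smul_sub, mem_Icc]
    constructor <;> nlinarith [mul_nonneg ht₀ hr.le, mul_nonneg (sub_nonneg.2 ht₁) hr.le]
  have hDw : HasFDerivAt w (fderiv ℝ u x₀ + δ • fderiv ℝ (hopfBarrier p lam r) x₀) x₀ :=
    (hu.differentiableOn (by norm_num) x₀ (hball x₀ le_rfl)).differentiableAt
      (hU.mem_nhds (hball x₀ le_rfl)) |>.hasFDerivAt.add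
      (((contDiff_hopfBarrier p lam r).differentiable (by norm_num) x₀).hasFDerivAt.const_mul δ)
  have hw := hmax.localize.hasFDerivWithinAt_nonpos hDw.hasFDerivWithinAt
    (mem_posTangentConeAt_of_segment_subset hseg)
  have hbar : fderiv ℝ (hopfBarrier p lam r) x₀ (p - x₀) =
      2 * lam * Real.exp (-lam * r) * r := by
    have hsum : ∑ i, (x₀ i - p i) * (p - x₀) i = -r := by
      simp only [r, euclSqDist, Pi.sub_apply, ← Finset.sum_neg_distrib]
      exact Finset.sum_congr rfl fun _ _ => by ring
    rw [fderiv_hopfBarrier_apply, hsum]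
    ring
  simp only [map_smul, add_apply, smul_apply, smul_eq_mul, hbar] at hw
  nlinarith [mul_pos (mul_pos hδ (mul_pos (mul_pos two_pos hlam) (Real.exp_pos (-lam * r)))) hr]

lemma eventually_eq_of_isMaxOn {y : Fin n → ℝ} (hmax : IsMaxOn u U y) (hy : y ∈ U) (hM : 0 ≤ u y) :
    ∀ᶠ x in 𝓝 y, u x = u y := by
  set M := u y with hyM
  by_contra h
  obtain ⟨ρ, hρ, hball⟩ := Metric.isOpen_iff.1 hU y hy
  have hnear : ∀ᶠ x in 𝓝 y, 4 * euclSqDist y x < ρ ^ 2 :=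
    (continuous_const.mul (continuous_euclSqDist y)).continuousAt.eventually_lt
      continuousAt_const (by simp [hρ])
  obtain ⟨p, hpM, hpy⟩ := ((not_eventually.1 h).and_eventually hnear).exists
  set K := {x | euclSqDist p x ≤ euclSqDist p y}
  have hKU : K ⊆ U := fun x (hx : euclSqDist p x ≤ euclSqDist p y) =>
    hball <| lt_of_pow_lt_pow_left₀ 2 hρ.le <|
    calc dist x y ^ 2 ≤ euclSqDist y x := dist_sq_le_euclSqDist y x
      _ ≤ 2 * (euclSqDist y p + euclSqDist p x) := euclSqDist_le_two_mul_add y p x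
      _ ≤ 4 * euclSqDist y p := by linarith [euclSqDist_comm p y]
      _ < ρ ^ 2 := hpy
  have hS : IsCompact (K ∩ u ⁻¹' {M}) :=
    (isCompact_euclSqDist_le p _).of_isClosed_subset
      ((hu.continuousOn.mono hKU).preimage_isClosed_of_isClosed
        (isCompact_euclSqDist_le p _).isClosed isClosed_singleton) inter_subset_left
  -- a point of `{u = M}` closest to `p`: the open ball about `p` through it lies in `{u < M}`
  obtain ⟨x₀, ⟨hx₀K, hx₀M⟩, hmin⟩ :=
    hS.exists_isMinOn ⟨y, (le_rfl : euclSqDist p y ≤ _), hyM⟩ (continuous_euclSqDist p).continuousOn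
  have hsubK : ∀ x, euclSqDist p x ≤ euclSqDist p x₀ → x ∈ K := fun x hx => hx.trans hx₀K
  have hle : ∀ x ∈ U, u x ≤ M := fun x hx => hmax hx
  have hneg := hopf_lemma hU ha_cont hb_cont hc_cont ha_symm ha_pos hc hu hLu hM
    (fun h : x₀ = p => hpM (h ▸ hx₀M)) (fun x hx => hKU (hsubK x hx))
    (fun x hx => hle x (hKU (hsubK x hx)))
    (fun x hx => (hle x (hKU (hsubK x hx.le))).lt_of_ne fun hxM =>
      (hmin ⟨hsubK x hx.le, hxM⟩).not_gt hx) hx₀M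
  have hgrad : fderiv ℝ u x₀ = 0 := IsLocalMax.fderiv_eq_zero <|
    IsMaxOn.isLocalMax (s := U) (fun x hx => hx₀M ▸ hle x hx) (hU.mem_nhds (hKU hx₀K))
  simp [hgrad] at hneg

end Hopf

theorem strong_maximum_principle_elliptic_general
    {n : ℕ}
    (U : Set (Fin n → ℝ)) (hUopen : IsOpen U) (hUconn : IsConnected U)
    (a : (Fin n → ℝ) → Fin n → Fin n → ℝ)
    (b : (Fin n → ℝ) → Fin n → ℝ)
    (c : (Fin n → ℝ) → ℝ)
    (ha_cont : ∀ α β, ContinuousOn (fun x => a x α β) U)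
    (hb_cont : ∀ α, ContinuousOn (fun x => b x α) U)
    (hc_cont : ContinuousOn c U)
    (ha_symm : ∀ x ∈ U, ∀ α β, a x α β = a x β α)
    (ha_posdef : ∀ x ∈ U, ∀ v : Fin n → ℝ, v ≠ 0 →
      0 < ∑ α : Fin n, ∑ β : Fin n, a x α β * v α * v β)
    (hc_nonneg : ∀ x ∈ U, 0 ≤ c x)
    (u : (Fin n → ℝ) → ℝ) (hu : ContDiffOn ℝ 2 u U)
    (hLu : ∀ x ∈ U, ellOp a b c u x ≤ 0)
    (x₀ : Fin n → ℝ) (hx₀ : x₀ ∈ U)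
    (hmax : ∀ x ∈ U, u x ≤ u x₀)
    (hx₀pos : 0 ≤ u x₀) :
    ∀ x ∈ U, u x = u x₀ := by
  have hmaxSet : IsOpen {x | x ∈ U ∧ u x = u x₀} := by
    refine isOpen_iff_mem_nhds.2 fun y ⟨hy, hyM⟩ => (hUopen.eventually_mem hy).and ?_
    rw [← hyM] at hmax hx₀pos ⊢
    exact eventually_eq_of_isMaxOn hUopen ha_cont hb_cont hc_cont ha_symm ha_posdef hc_nonneg hu hLu
      hmax hy hx₀pos
  have hbelow : IsOpen {x | x ∈ U ∧ u x < u x₀} :=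
    hu.continuousOn.isOpen_inter_preimage hUopen isOpen_Iio
  have hsub := hUconn.isPreconnected.subset_left_of_subset_union hmaxSet hbelow
    (disjoint_left.2 fun x hx hx' => hx'.2.ne hx.2)
    (fun x hx => (hmax x hx).eq_or_lt.imp (⟨hx, ·⟩) (⟨hx, ·⟩)) ⟨x₀, hx₀, hx₀, rfl⟩
  exact fun x hx => (hsub hx).2

/-- Strong maximum principle for scalar elliptic operators with nonnegative
zeroth-order coefficient. -/
theorem strong_maximum_principle_elliptic
    {n : ℕ} (hn : 1 ≤ n)
    (U : Set (Fin n → ℝ)) (hUopen : IsOpen U) (hUconn : IsConnected U)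
    (a : (Fin n → ℝ) → Fin n → Fin n → ℝ)
    (b : (Fin n → ℝ) → Fin n → ℝ)
    (c : (Fin n → ℝ) → ℝ)
    (ha_cont : ∀ α β, ContinuousOn (fun x => a x α β) U)
    (hb_cont : ∀ α, ContinuousOn (fun x => b x α) U)
    (hc_cont : ContinuousOn c U)
    (ha_symm : ∀ x ∈ U, ∀ α β, a x α β = a x β α)
    (ha_posdef : ∀ x ∈ U, ∀ v : Fin n → ℝ, v ≠ 0 →
      0 < ∑ α : Fin n, ∑ β : Fin n, a x α β * v α * v β)
    (hc_nonneg : ∀ x ∈ U, 0 ≤ c x)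
    (u : (Fin n → ℝ) → ℝ) (hu : ContDiffOn ℝ 2 u U)
    (hLu : ∀ x ∈ U, ellOp a b c u x ≤ 0)
    (x₀ : Fin n → ℝ) (hx₀ : x₀ ∈ U)
    (hmax : ∀ x ∈ U, u x ≤ u x₀)
    (hx₀pos : 0 ≤ u x₀) :
    ∀ x ∈ U, u x = u x₀ :=
  strong_maximum_principle_elliptic_general U hUopen hUconn a b c ha_cont hb_cont hc_cont ha_symm
    ha_posdef hc_nonneg u hu hLu x₀ hx₀ hmax hx₀pos
end

section
/- (One-dimensional strong minimum principle, nonnegative zeroth-order coefficient.) Let U ⊆ ℝ be a nonempty open interval, let b, c : U → ℝ be continuous with c(x) ≥ 0 for all x ∈ U, and let u : U → ℝ be twice continuously differentiable with −u″(x) + b(x) u′(x) + c(x) u(x) ≥ 0 for all x ∈ U. If u attains its infimum over U at some point x₀ ∈ U and u(x₀) ≤ 0, then u is constant on U. -/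
/-!
Since `c ≥ 0` and `u x₀ ≤ 0`, the function `v = u - u x₀ ≥ 0` satisfies `v'' ≤ b v' + c v` with
`v x₀ = v' x₀ = 0`. To the right of `x₀`, for `k` large compared with the bounds of `b` and `c`,
the function `v' - k v` vanishes at `x₀` and decreases wherever it is positive, so it stays
`≤ 0`; then `v' ≤ k v` and `v x₀ = 0` force `v ≤ 0`, i.e. `v = 0`. Both steps are the same
comparison with an exponential barrier. The left of `x₀` follows by the reflection `x ↦ -x`.
-/

open Set Filter Topology Real

theorem nonpos_of_hasDerivWithinAt_le_mul_of_pos {f f' : ℝ → ℝ} {a b μ : ℝ}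
    (hf : ContinuousOn f (Icc a b)) (hf' : ∀ x ∈ Ico a b, HasDerivWithinAt f (f' x) (Ici x) x)
    (ha : f a ≤ 0) (bound : ∀ x ∈ Ico a b, 0 < f x → f' x ≤ μ * f x) :
    ∀ x ∈ Icc a b, f x ≤ 0 := by
  set K := |μ| + 1
  have fence : ∀ δ > 0, ∀ x ∈ Icc a b, f x ≤ δ * exp (K * (x - a)) := by
    intro δ hδ
    refine image_le_of_deriv_right_lt_deriv_boundary hf hf' (by simpa using ha.trans hδ.le)
      (B' := fun x => K * (δ * exp (K * (x - a)))) (fun x => ?_) fun x hx hfx => ?_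
    · exact ((((hasDerivAt_id' x).sub_const a).const_mul K).exp.const_mul δ).congr_deriv (by ring)
    · have hB : 0 < δ * exp (K * (x - a)) := by positivity
      have hμK : μ < K := by linarith [le_abs_self μ]
      calc f' x ≤ μ * f x := bound x hx (hfx ▸ hB)
        _ < K * (δ * exp (K * (x - a))) := by rw [hfx]; exact mul_lt_mul_of_pos_right hμK hB
  intro x hx
  have hlim : Tendsto (fun δ => δ * exp (K * (x - a))) (𝓝[>] 0) (𝓝 0) := by
    have := ((continuous_mul_const (exp (K * (x - a)))).tendsto 0).mono_left
      (nhdsWithin_le_nhds (s := Ioi 0))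
    simpa using this
  exact ge_of_tendsto hlim (eventually_nhdsWithin_of_forall fun δ hδ => fence δ hδ x hx)

theorem eqOn_zero_of_deriv_deriv_le_right {v b c : ℝ → ℝ} {x₀ x₁ : ℝ}
    (hv : ∀ x ∈ Icc x₀ x₁, DifferentiableAt ℝ v x)
    (hv' : ∀ x ∈ Icc x₀ x₁, DifferentiableAt ℝ (deriv v) x)
    (hb : BddAbove (b '' Icc x₀ x₁)) (hc : BddAbove (c '' Icc x₀ x₁))
    (hv_nonneg : ∀ x ∈ Icc x₀ x₁, 0 ≤ v x) (hv₀ : v x₀ = 0) (hv'₀ : deriv v x₀ = 0)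
    (hineq : ∀ x ∈ Icc x₀ x₁, deriv (deriv v) x ≤ b x * deriv v x + c x * v x) :
    EqOn v 0 (Icc x₀ x₁) := by
  obtain ⟨β, hβ⟩ := hb
  obtain ⟨γ, hγ⟩ := hc
  set k := |β| + |γ| + 1
  have hbk : ∀ x ∈ Icc x₀ x₁, b x - k ≤ -|γ| - 1 := fun x hx => by
    linarith [hβ (mem_image_of_mem b hx), le_abs_self β]
  have hck : ∀ x ∈ Icc x₀ x₁, (b x - k) * k + c x ≤ 0 := fun x hx => by
    nlinarith [hbk x hx, hγ (mem_image_of_mem c hx), le_abs_self γ, abs_nonneg β, abs_nonneg γ]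
  have hv_deriv : ∀ x ∈ Icc x₀ x₁, HasDerivAt v (deriv v x) x := fun x hx => (hv x hx).hasDerivAt
  have hφ_deriv : ∀ x ∈ Icc x₀ x₁, HasDerivAt (fun y => deriv v y - k * v y)
      (deriv (deriv v) x - k * deriv v x) x := fun x hx =>
    (hv' x hx).hasDerivAt.sub ((hv_deriv x hx).const_mul k)
  have hφ_nonpos : ∀ x ∈ Icc x₀ x₁, deriv v x - k * v x ≤ 0 := by
    refine nonpos_of_hasDerivWithinAt_le_mul_of_pos (μ := 0)
      (fun x hx => (hφ_deriv x hx).continuousAt.continuousWithinAt)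
      (fun x hx => (hφ_deriv x (Ico_subset_Icc_self hx)).hasDerivWithinAt)
      (by simp [hv₀, hv'₀]) fun x hx hpos => ?_
    replace hx := Ico_subset_Icc_self hx
    have h₁ : (b x - k) * (deriv v x - k * v x) ≤ 0 :=
      mul_nonpos_of_nonpos_of_nonneg (by linarith [hbk x hx, abs_nonneg γ]) hpos.le
    have h₂ : ((b x - k) * k + c x) * v x ≤ 0 :=
      mul_nonpos_of_nonpos_of_nonneg (hck x hx) (hv_nonneg x hx)
    linear_combination hineq x hx + h₁ + h₂
  have hv_nonpos : ∀ x ∈ Icc x₀ x₁, v x ≤ 0 :=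
    nonpos_of_hasDerivWithinAt_le_mul_of_pos (μ := k)
      (fun x hx => (hv_deriv x hx).continuousAt.continuousWithinAt)
      (fun x hx => (hv_deriv x (Ico_subset_Icc_self hx)).hasDerivWithinAt)
      hv₀.le fun x hx _ => by linarith [hφ_nonpos x (Ico_subset_Icc_self hx)]
  exact fun x hx => le_antisymm (hv_nonpos x hx) (hv_nonneg x hx)

theorem eqOn_zero_of_deriv_deriv_le_left {v b c : ℝ → ℝ} {x₀ x₁ : ℝ}
    (hv : ∀ x ∈ Icc x₁ x₀, DifferentiableAt ℝ v x)
    (hv' : ∀ x ∈ Icc x₁ x₀, DifferentiableAt ℝ (deriv v) x)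
    (hb : BddBelow (b '' Icc x₁ x₀)) (hc : BddAbove (c '' Icc x₁ x₀))
    (hv_nonneg : ∀ x ∈ Icc x₁ x₀, 0 ≤ v x) (hv₀ : v x₀ = 0) (hv'₀ : deriv v x₀ = 0)
    (hineq : ∀ x ∈ Icc x₁ x₀, deriv (deriv v) x ≤ b x * deriv v x + c x * v x) :
    EqOn v 0 (Icc x₁ x₀) := by
  have hderiv : deriv (fun x => v (-x)) = fun x => -deriv v (-x) := funext (deriv_comp_neg v)
  have hreflect : EqOn (fun x => v (-x)) 0 (Icc (-x₀) (-x₁)) := by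
    refine eqOn_zero_of_deriv_deriv_le_right (b := fun x => -b (-x)) (c := fun x => c (-x))
      (fun x hx => differentiableAt_comp_neg.mpr (hv _ (neg_mem_Icc_iff.mpr hx)))
      (fun x hx => ?_) ?_ ?_ (fun x hx => hv_nonneg _ (neg_mem_Icc_iff.mpr hx))
      (by simpa using hv₀) (by simp [hderiv, hv'₀]) fun x hx => ?_
    · rw [hderiv]
      exact (differentiableAt_comp_neg.mpr (hv' _ (neg_mem_Icc_iff.mpr hx))).neg
    · obtain ⟨β, hβ⟩ := hb
      refine ⟨-β, ?_⟩
      rintro _ ⟨x, hx, rfl⟩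
      exact neg_le_neg (hβ (mem_image_of_mem b (neg_mem_Icc_iff.mpr hx)))
    · obtain ⟨γ, hγ⟩ := hc
      refine ⟨γ, ?_⟩
      rintro _ ⟨x, hx, rfl⟩
      exact hγ (mem_image_of_mem c (neg_mem_Icc_iff.mpr hx))
    · have := hineq _ (neg_mem_Icc_iff.mpr hx)
      rw [hderiv, deriv.fun_neg, deriv_comp_neg (deriv v)]
      linarith
  intro x hx
  simpa using hreflect (neg_mem_Icc_iff.mpr (by simpa using hx))

theorem eqOn_zero_of_deriv_deriv_le {s : Set ℝ} (hs : s.OrdConnected) {v b c : ℝ → ℝ} {x₀ : ℝ}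
    (hv : ∀ x ∈ s, DifferentiableAt ℝ v x) (hv' : ∀ x ∈ s, DifferentiableAt ℝ (deriv v) x)
    (hb : ContinuousOn b s) (hc : ContinuousOn c s)
    (hv_nonneg : ∀ x ∈ s, 0 ≤ v x) (hx₀ : x₀ ∈ s) (hv₀ : v x₀ = 0) (hv'₀ : deriv v x₀ = 0)
    (hineq : ∀ x ∈ s, deriv (deriv v) x ≤ b x * deriv v x + c x * v x) :
    EqOn v 0 s := by
  intro x hx
  rcases le_total x₀ x with h | h
  · have hJ := hs.out hx₀ hx
    exact eqOn_zero_of_deriv_deriv_le_right (fun y hy => hv y (hJ hy)) (fun y hy => hv' y (hJ hy))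
      (isCompact_Icc.bddAbove_image (hb.mono hJ)) (isCompact_Icc.bddAbove_image (hc.mono hJ))
      (fun y hy => hv_nonneg y (hJ hy)) hv₀ hv'₀ (fun y hy => hineq y (hJ hy)) ⟨h, le_rfl⟩
  · have hJ := hs.out hx hx₀
    exact eqOn_zero_of_deriv_deriv_le_left (fun y hy => hv y (hJ hy)) (fun y hy => hv' y (hJ hy))
      (isCompact_Icc.bddBelow_image (hb.mono hJ)) (isCompact_Icc.bddAbove_image (hc.mono hJ))
      (fun y hy => hv_nonneg y (hJ hy)) hv₀ hv'₀ (fun y hy => hineq y (hJ hy)) ⟨le_rfl, h⟩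

theorem one_dim_strong_minimum_principle_general
    (U : Set ℝ) (hUopen : IsOpen U) (hUint : U.OrdConnected)
    (b c : ℝ → ℝ)
    (hb_cont : ContinuousOn b U) (hc_cont : ContinuousOn c U)
    (hc_nonneg : ∀ x ∈ U, 0 ≤ c x)
    (u : ℝ → ℝ) (hu : ContDiffOn ℝ 2 u U)
    (hineq : ∀ x ∈ U, 0 ≤ -(deriv (deriv u) x) + b x * deriv u x + c x * u x)
    (x₀ : ℝ) (hx₀ : x₀ ∈ U)
    (hmin : ∀ x ∈ U, u x₀ ≤ u x)
    (hx₀neg : u x₀ ≤ 0) :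
    ∀ x ∈ U, u x = u x₀ := by
  set v := fun x => u x - u x₀
  have hv_deriv : deriv v = deriv u := deriv_sub_const_fun _
  have hv : ∀ x ∈ U, DifferentiableAt ℝ v x := fun x hx =>
    ((hu.contDiffAt (hUopen.mem_nhds hx)).differentiableAt (by norm_num)).sub_const _
  have hv' : ∀ x ∈ U, DifferentiableAt ℝ (deriv v) x := fun x hx => hv_deriv ▸
    ((hu.deriv_of_isOpen hUopen (m := 1) (by norm_num)).contDiffAt
      (hUopen.mem_nhds hx)).differentiableAt (by norm_num)
  have hv'₀ : deriv v x₀ = 0 :=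
    hv_deriv ▸ IsLocalMin.deriv_eq_zero (mem_of_superset (hUopen.mem_nhds hx₀) hmin)
  have hineq_v : ∀ x ∈ U, deriv (deriv v) x ≤ b x * deriv v x + c x * v x := fun x hx => by
    rw [hv_deriv]
    nlinarith [hineq x hx, mul_nonpos_of_nonneg_of_nonpos (hc_nonneg x hx) hx₀neg]
  have hv_zero : EqOn v 0 U := eqOn_zero_of_deriv_deriv_le hUint hv hv' hb_cont hc_cont
    (fun x hx => sub_nonneg.mpr (hmin x hx)) hx₀ (sub_self _) hv'₀ hineq_v
  exact fun x hx => sub_eq_zero.mp (hv_zero hx)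

/-- One-dimensional strong minimum principle with nonnegative zeroth-order coefficient:
if `-u'' + b u' + c u ≥ 0` on a nonempty open interval `U` with `c ≥ 0`, and `u` attains
a nonpositive infimum at an interior point, then `u` is constant on `U`. -/
theorem one_dim_strong_minimum_principle
    (U : Set ℝ) (hUopen : IsOpen U) (hUne : U.Nonempty) (hUint : U.OrdConnected)
    (b c : ℝ → ℝ)
    (hb_cont : ContinuousOn b U) (hc_cont : ContinuousOn c U)
    (hc_nonneg : ∀ x ∈ U, 0 ≤ c x)
    (u : ℝ → ℝ) (hu : ContDiffOn ℝ 2 u U)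
    (hineq : ∀ x ∈ U, 0 ≤ -(deriv (deriv u) x) + b x * deriv u x + c x * u x)
    (x₀ : ℝ) (hx₀ : x₀ ∈ U)
    (hmin : ∀ x ∈ U, u x₀ ≤ u x)
    (hx₀neg : u x₀ ≤ 0) :
    ∀ x ∈ U, u x = u x₀ :=
  one_dim_strong_minimum_principle_general U hUopen hUint b c hb_cont hc_cont hc_nonneg u hu hineq
    x₀ hx₀ hmin hx₀neg
end

section
/- (One-dimensional strong minimum principle, strictly positive zeroth-order coefficient.) Let U ⊆ ℝ be a nonempty open interval, let b, c : U → ℝ be continuous with c(x) > 0 for all x ∈ U, and let u : U → ℝ be twice continuously differentiable with −u″(x) + b(x) u′(x) + c(x) u(x) ≥ 0 for all x ∈ U. If u attains its infimum over U at some point x₀ ∈ U and u(x₀) ≤ 0, then u vanishes identically on U. -/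
/-!
At the minimum point `x₀` we have `u' x₀ = 0` and `u'' x₀ ≥ 0`, so the inequality gives
`c x₀ * u x₀ ≥ u'' x₀ ≥ 0`, which forces `u x₀ = 0`. It remains to see that `u ≤ u x₀`,
by Hopf's barrier argument: suppose `u x > u a` for some `x > a`, where `u' a = 0` and
`u a ≤ 0`. Take `w y = k + ε * exp (α * y)` with `α` so large that `α ^ 2` beats `b α + c`;
then `-w'' + b w' + c w < 0` on `[a, x]`, and `k`, `ε` can be chosen so that `w` agrees
with `u` at `a` and at `x`. The difference `ψ = u - w` vanishes at both ends and satisfies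
`-ψ'' + b ψ' + c ψ > 0`, so it has no nonpositive interior local minimum; hence `ψ ≥ 0` on
`[a, x]`, contradicting `ψ' a = -w' a < 0`. Points `x < a` follow by the reflection `y ↦ -y`.
-/

open Set Filter Topology

noncomputable def ellipticOp (b c u : ℝ → ℝ) (x : ℝ) : ℝ :=
  -(deriv (deriv u) x) + b x * deriv u x + c x * u x

theorem IsLocalMin.deriv_deriv_nonneg {f : ℝ → ℝ} {x : ℝ} (h : IsLocalMin f x)
    (hf : ContinuousAt f x) : 0 ≤ deriv (deriv f) x := by
  -- if `f'' x < 0`, then `x` is also a local maximum, so `f` is locally constant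
  by_contra! hneg
  have hconst : f =ᶠ[𝓝 x] fun _ => f x :=
    (h.and (isLocalMax_of_deriv_deriv_neg hneg h.deriv_eq_zero hf)).mono
      fun y hy => le_antisymm hy.2 hy.1
  have hderiv : deriv f =ᶠ[𝓝 x] fun _ => 0 := by simpa using hconst.deriv
  rw [hderiv.deriv_eq, deriv_const] at hneg
  exact hneg.false

theorem IsLocalMin.ellipticOp_nonpos {b c u : ℝ → ℝ} {x : ℝ} (h : IsLocalMin u x)
    (hu : ContinuousAt u x) (hc : 0 ≤ c x) (hux : u x ≤ 0) : ellipticOp b c u x ≤ 0 := by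
  have hu'' := h.deriv_deriv_nonneg hu
  have hcu : c x * u x ≤ 0 := mul_nonpos_of_nonneg_of_nonpos hc hux
  rw [ellipticOp, h.deriv_eq_zero, mul_zero]
  linarith

theorem ellipticOp_sub {b c u w : ℝ → ℝ} {x : ℝ} (hu : ContDiffAt ℝ 2 u x)
    (hw : ContDiffAt ℝ 2 w x) :
    ellipticOp b c (u - w) x = ellipticOp b c u x - ellipticOp b c w x := by
  have h1 := iteratedDeriv_sub (n := 1) (hu.of_le one_le_two) (hw.of_le one_le_two)
  have h2 := iteratedDeriv_sub (n := 2) hu hw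
  simp only [iteratedDeriv_succ, iteratedDeriv_zero] at h1 h2
  simp only [ellipticOp, h1, h2, Pi.sub_apply]
  ring

theorem ellipticOp_comp_neg (b c u : ℝ → ℝ) (x : ℝ) :
    ellipticOp (fun y => -b (-y)) (fun y => c (-y)) (fun y => u (-y)) x =
      ellipticOp b c u (-x) := by
  have h1 : deriv (fun y => u (-y)) = fun y => -deriv u (-y) := funext (deriv_comp_neg u)
  have h2 : deriv (deriv fun y => u (-y)) x = deriv (deriv u) (-x) := by
    rw [h1, deriv.fun_neg, deriv_comp_neg, neg_neg]
  rw [ellipticOp, ellipticOp, h2, h1]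
  ring

theorem exists_barrier_ellipticOp_neg {b c : ℝ → ℝ} {a x m M : ℝ} (hax : a < x)
    (hb : ContinuousOn b (Icc a x)) (hc : ContinuousOn c (Icc a x))
    (hc0 : ∀ y ∈ Icc a x, 0 ≤ c y) (hm : m ≤ 0) (hmM : m < M) :
    ∃ w : ℝ → ℝ, ContDiff ℝ 2 w ∧ w a = m ∧ w x = M ∧ 0 < deriv w a ∧
      ∀ y ∈ Icc a x, ellipticOp b c w y < 0 := by
  obtain ⟨B, hB⟩ := isCompact_Icc.exists_bound_of_continuousOn hb
  obtain ⟨C, hC⟩ := isCompact_Icc.exists_bound_of_continuousOn hc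
  have hB0 : 0 ≤ B := (norm_nonneg _).trans (hB a (left_mem_Icc.2 hax.le))
  have hC0 : 0 ≤ C := (norm_nonneg _).trans (hC a (left_mem_Icc.2 hax.le))
  set α := B + C + 1
  have hα : ∀ y ∈ Icc a x, -α ^ 2 + b y * α + c y < 0 := by
    intro y hy
    have hby : b y ≤ B := (le_abs_self _).trans (hB y hy)
    have hcy : c y ≤ C := (le_abs_self _).trans (hC y hy)
    nlinarith
  have hgap : 0 < Real.exp (α * x) - Real.exp (α * a) := by
    rw [sub_pos, Real.exp_lt_exp]; exact mul_lt_mul_of_pos_left hax (by positivity)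
  set ε := (M - m) / (Real.exp (α * x) - Real.exp (α * a))
  have hε : 0 < ε := div_pos (sub_pos.2 hmM) hgap
  set k := m - ε * Real.exp (α * a)
  have hk : k ≤ 0 := by have := Real.exp_pos (α * a); nlinarith
  have hexp : ∀ (κ : ℝ) y, HasDerivAt (fun y => κ * Real.exp (α * y))
      (κ * α * Real.exp (α * y)) y := fun κ y => by
    simpa [mul_comm, mul_assoc, mul_left_comm] using
      (((hasDerivAt_id y).const_mul α).exp).const_mul κ
  have hd1 : deriv (fun y => k + ε * Real.exp (α * y)) = fun y => ε * α * Real.exp (α * y) :=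
    funext fun y => ((hexp ε y).const_add k).deriv
  have hd2 : deriv (fun y => ε * α * Real.exp (α * y)) =
      fun y => ε * α * α * Real.exp (α * y) :=
    funext fun y => (hexp (ε * α) y).deriv
  refine ⟨fun y => k + ε * Real.exp (α * y), by fun_prop, by simp [k], ?_, ?_, ?_⟩
  · simp only [k, ε]; field_simp; ring
  · rw [hd1]; positivity
  · intro y hy
    have hLw : ellipticOp b c (fun y => k + ε * Real.exp (α * y)) y =
        ε * Real.exp (α * y) * (-α ^ 2 + b y * α + c y) + c y * k := by
      rw [ellipticOp, hd1, hd2]; ring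
    rw [hLw]
    exact add_neg_of_neg_of_nonpos (mul_neg_of_pos_of_neg (by positivity) (hα y hy))
      (mul_nonpos_of_nonneg_of_nonpos (hc0 y hy) hk)

theorem apply_le_of_ellipticOp_nonneg_right {b c u : ℝ → ℝ} {a x : ℝ} (hax : a < x)
    (hu : ∀ y ∈ Icc a x, ContDiffAt ℝ 2 u y) (hb : ContinuousOn b (Icc a x))
    (hc : ContinuousOn c (Icc a x)) (hc0 : ∀ y ∈ Icc a x, 0 ≤ c y)
    (hL : ∀ y ∈ Ioo a x, 0 ≤ ellipticOp b c u y) (hda : deriv u a = 0) (hua : u a ≤ 0) :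
    u x ≤ u a := by
  by_contra! hlt
  obtain ⟨w, hw, hwa, hwx, hdwa, hLw⟩ := exists_barrier_ellipticOp_neg hax hb hc hc0 hua hlt
  have hψa : (u - w) a = 0 := by simp [hwa]
  have hψx : (u - w) x = 0 := by simp [hwx]
  have hψcont : ∀ y ∈ Icc a x, ContinuousAt (u - w) y := fun y hy =>
    (hu y hy).continuousAt.sub hw.continuous.continuousAt
  obtain ⟨z, hz, hmin⟩ := isCompact_Icc.exists_isMinOn (nonempty_Icc.2 hax.le)
    fun y hy => (hψcont y hy).continuousWithinAt
  by_cases hint : z ∈ Ioo a x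
  · have hloc : IsLocalMin (u - w) z := hmin.isLocalMin (Icc_mem_nhds hint.1 hint.2)
    have hLψ := hloc.ellipticOp_nonpos (b := b) (hψcont z hz) (hc0 z hz)
      (hψa ▸ hmin (left_mem_Icc.2 hax.le))
    rw [ellipticOp_sub (hu z hz) hw.contDiffAt] at hLψ
    linarith [hL z hint, hLw z hz]
  · have hψz : (u - w) z = 0 := by
      rcases hz.1.eq_or_lt with rfl | hza
      · exact hψa
      rcases hz.2.eq_or_lt with rfl | hzx
      · exact hψx
      exact absurd ⟨hza, hzx⟩ hint
    have hdψ : deriv (u - w) a < 0 := by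
      rw [deriv_sub ((hu a (left_mem_Icc.2 hax.le)).differentiableAt two_ne_zero)
        (hw.differentiable two_ne_zero).differentiableAt, hda]
      linarith
    have hsign : ∀ᶠ y in 𝓝[>] a, SignType.sign ((u - w) y) = SignType.sign (a - y) :=
      nhdsWithin_le_nhds (eventually_nhdsWithin_sign_eq_of_deriv_neg hdψ hψa)
    obtain ⟨y, hsign, hy⟩ := (hsign.and (Ioo_mem_nhdsGT hax)).exists
    rw [sign_neg (sub_neg.2 hy.1), sign_eq_neg_one_iff] at hsign
    exact (hψz ▸ hmin (Ioo_subset_Icc_self hy)).not_gt hsign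

theorem apply_le_of_ellipticOp_nonneg_left {b c u : ℝ → ℝ} {a x : ℝ} (hxa : x < a)
    (hu : ∀ y ∈ Icc x a, ContDiffAt ℝ 2 u y) (hb : ContinuousOn b (Icc x a))
    (hc : ContinuousOn c (Icc x a)) (hc0 : ∀ y ∈ Icc x a, 0 ≤ c y)
    (hL : ∀ y ∈ Ioo x a, 0 ≤ ellipticOp b c u y) (hda : deriv u a = 0) (hua : u a ≤ 0) :
    u x ≤ u a := by
  have hIcc : MapsTo Neg.neg (Icc (-a) (-x)) (Icc x a) := fun y hy =>
    ⟨le_neg_of_le_neg hy.2, neg_le_of_neg_le hy.1⟩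
  simpa using apply_le_of_ellipticOp_nonneg_right (neg_lt_neg hxa)
    (b := fun y => -b (-y)) (c := fun y => c (-y)) (u := fun y => u (-y))
    (fun y hy => (hu (-y) (hIcc hy)).comp y contDiff_neg.contDiffAt)
    (hb.comp continuousOn_neg hIcc).neg (hc.comp continuousOn_neg hIcc)
    (fun y hy => hc0 (-y) (hIcc hy))
    (fun y hy => ellipticOp_comp_neg b c u y ▸
      hL (-y) ⟨lt_neg_of_lt_neg hy.2, neg_lt_of_neg_lt hy.1⟩)
    (by rw [deriv_comp_neg, neg_neg, hda, neg_zero]) (by simpa using hua)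

theorem apply_le_of_ellipticOp_nonneg {U : Set ℝ} (hU : U.OrdConnected) {b c u : ℝ → ℝ}
    (hu : ∀ y ∈ U, ContDiffAt ℝ 2 u y) (hb : ContinuousOn b U) (hc : ContinuousOn c U)
    (hc0 : ∀ y ∈ U, 0 ≤ c y) (hL : ∀ y ∈ U, 0 ≤ ellipticOp b c u y)
    {a : ℝ} (ha : a ∈ U) (hda : deriv u a = 0) (hua : u a ≤ 0) :
    ∀ x ∈ U, u x ≤ u a := by
  intro x hx
  rcases lt_trichotomy a x with hax | rfl | hxa
  · have hI := hU.out ha hx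
    exact apply_le_of_ellipticOp_nonneg_right hax (fun y hy => hu y (hI hy)) (hb.mono hI)
      (hc.mono hI) (fun y hy => hc0 y (hI hy)) (fun y hy => hL y (hI (Ioo_subset_Icc_self hy)))
      hda hua
  · exact le_rfl
  · have hI := hU.out hx ha
    exact apply_le_of_ellipticOp_nonneg_left hxa (fun y hy => hu y (hI hy)) (hb.mono hI)
      (hc.mono hI) (fun y hy => hc0 y (hI hy)) (fun y hy => hL y (hI (Ioo_subset_Icc_self hy)))
      hda hua

theorem one_dim_strong_minimum_principle_pos_general
    (U : Set ℝ) (hUopen : IsOpen U) (hUint : U.OrdConnected)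
    (b c : ℝ → ℝ)
    (hb_cont : ContinuousOn b U) (hc_cont : ContinuousOn c U)
    (hc_pos : ∀ x ∈ U, 0 < c x)
    (u : ℝ → ℝ) (hu : ContDiffOn ℝ 2 u U)
    (hineq : ∀ x ∈ U, 0 ≤ -(deriv (deriv u) x) + b x * deriv u x + c x * u x)
    (x₀ : ℝ) (hx₀ : x₀ ∈ U)
    (hmin : ∀ x ∈ U, u x₀ ≤ u x)
    (hx₀neg : u x₀ ≤ 0) :
    ∀ x ∈ U, u x = 0 := by
  have hu' : ∀ x ∈ U, ContDiffAt ℝ 2 u x := fun x hx => hu.contDiffAt (hUopen.mem_nhds hx)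
  have hloc : IsLocalMin u x₀ := (isMinOn_iff.2 hmin).isLocalMin (hUopen.mem_nhds hx₀)
  have hux₀ : u x₀ = 0 := by
    have hu'' := hloc.deriv_deriv_nonneg (hu' x₀ hx₀).continuousAt
    have h := hineq x₀ hx₀
    rw [hloc.deriv_eq_zero, mul_zero] at h
    have hcu : 0 ≤ c x₀ * u x₀ := by linarith
    exact le_antisymm hx₀neg (nonneg_of_mul_nonneg_right hcu (hc_pos x₀ hx₀))
  have hle := apply_le_of_ellipticOp_nonneg hUint hu' hb_cont hc_cont
    (fun x hx => (hc_pos x hx).le) hineq hx₀ hloc.deriv_eq_zero hx₀neg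
  exact fun x hx => le_antisymm (hux₀ ▸ hle x hx) (hux₀ ▸ hmin x hx)

/-- One-dimensional strong minimum principle with strictly positive zeroth-order
coefficient: if `-u'' + b u' + c u ≥ 0` on a nonempty open interval `U` with `c > 0`,
and `u` attains a nonpositive infimum at an interior point, then `u ≡ 0` on `U`. -/
theorem one_dim_strong_minimum_principle_pos
    (U : Set ℝ) (hUopen : IsOpen U) (hUne : U.Nonempty) (hUint : U.OrdConnected)
    (b c : ℝ → ℝ)
    (hb_cont : ContinuousOn b U) (hc_cont : ContinuousOn c U)
    (hc_pos : ∀ x ∈ U, 0 < c x)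
    (u : ℝ → ℝ) (hu : ContDiffOn ℝ 2 u U)
    (hineq : ∀ x ∈ U, 0 ≤ -(deriv (deriv u) x) + b x * deriv u x + c x * u x)
    (x₀ : ℝ) (hx₀ : x₀ ∈ U)
    (hmin : ∀ x ∈ U, u x₀ ≤ u x)
    (hx₀neg : u x₀ ≤ 0) :
    ∀ x ∈ U, u x = 0 :=
  one_dim_strong_minimum_principle_pos_general U hUopen hUint b c hb_cont hc_cont hc_pos u hu hineq
    x₀ hx₀ hmin hx₀neg
end

section
/- (Green's function on the Rindler horizon, d = 4.) Define G : (0,∞) → ℝ by G(χ) = −(1/(2π)) · (1 + cosh(χ) · ln(sinh(χ)/(1 + cosh(χ)))). Then: (i) for all χ > 0, (d/dχ)(sinh(χ) · G′(χ)) = 2 · sinh(χ) · G(χ); (ii) G(χ) → 0 as χ → ∞; (iii) lim_{χ→0⁺} 2π · sinh(χ) · G′(χ) = −1. -/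
/-!
Write `L χ = log (sinh χ / (1 + cosh χ)) = log (tanh (χ / 2))`, so that `L' = 1 / sinh` and
`G = -(1 + cosh · L) / 2π`. Then `sinh · G' = -(sinh² · L + cosh) / 2π`, and differentiating once
more gives `2 sinh · G` because `cosh² - sinh² = 1`. As `χ → ∞`, put `t = e^{-χ}`: then
`cosh · L = (1 + t²)/2 · log ((1 - t)/(1 + t)) / t → -1`, the slope of `log ((1 - t)/(1 + t))`
at `0`. As `χ → 0`, `sinh² · L → 0` because `y log y → 0`, leaving `sinh · G' → -1 / 2π`.
-/

open Real Filter Topology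

noncomputable def greenProfile (χ : ℝ) : ℝ :=
  1 + cosh χ * log (sinh χ / (1 + cosh χ))

lemma one_add_cosh_pos (x : ℝ) : 0 < 1 + cosh x := by
  linarith [cosh_pos x]

lemma hasDerivAt_log_sinh_div_one_add_cosh {x : ℝ} (hx : x ≠ 0) :
    HasDerivAt (fun y => log (sinh y / (1 + cosh y))) (sinh x)⁻¹ x := by
  have hs : sinh x ≠ 0 := sinh_ne_zero.mpr hx
  have hc : 1 + cosh x ≠ 0 := (one_add_cosh_pos x).ne'
  have hq : HasDerivAt (fun y => sinh y / (1 + cosh y))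
      ((cosh x * (1 + cosh x) - sinh x * sinh x) / (1 + cosh x) ^ 2) x :=
    (hasDerivAt_sinh x).div ((hasDerivAt_cosh x).const_add 1) hc
  convert hq.log (div_ne_zero hs hc) using 1
  field_simp
  linear_combination -cosh_sq x

lemma hasDerivAt_greenProfile {x : ℝ} (hx : x ≠ 0) :
    HasDerivAt greenProfile
      (sinh x * log (sinh x / (1 + cosh x)) + cosh x * (sinh x)⁻¹) x :=
  ((hasDerivAt_cosh x).mul (hasDerivAt_log_sinh_div_one_add_cosh hx)).const_add 1

lemma sinh_mul_deriv_greenProfile {x : ℝ} (hx : x ≠ 0) :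
    sinh x * deriv greenProfile x = sinh x ^ 2 * log (sinh x / (1 + cosh x)) + cosh x := by
  rw [(hasDerivAt_greenProfile hx).deriv]
  field_simp [sinh_ne_zero.mpr hx]

lemma hasDerivAt_sinh_mul_deriv_greenProfile {x : ℝ} (hx : x ≠ 0) :
    HasDerivAt (fun y => sinh y * deriv greenProfile y) (2 * sinh x * greenProfile x) x := by
  have hF : HasDerivAt (fun y => sinh y ^ 2 * log (sinh y / (1 + cosh y)) + cosh y)
      (2 * sinh x * greenProfile x) x := by
    have hsq : HasDerivAt (fun y => sinh y ^ 2) (2 * sinh x * cosh x) x :=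
      ((hasDerivAt_sinh x).pow 2).congr_deriv (by ring)
    refine ((hsq.mul (hasDerivAt_log_sinh_div_one_add_cosh hx)).add
      (hasDerivAt_cosh x)).congr_deriv ?_
    field_simp [sinh_ne_zero.mpr hx]
    simp only [greenProfile]
    ring
  refine hF.congr_of_eventuallyEq ?_
  filter_upwards [isOpen_ne.mem_nhds hx] with y hy
  exact sinh_mul_deriv_greenProfile hy

lemma sinh_div_one_add_cosh_eq (x : ℝ) :
    sinh x / (1 + cosh x) = (1 - exp (-x)) / (1 + exp (-x)) := by
  rw [sinh_eq, cosh_eq]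
  have := exp_pos x
  field_simp
  rw [exp_neg]
  field_simp
  ring

lemma cosh_eq_exp_neg (x : ℝ) : cosh x = (1 + exp (-x) ^ 2) / 2 * (exp (-x))⁻¹ := by
  rw [cosh_eq, exp_neg]
  field_simp

lemma tendsto_cosh_mul_log_sinh_div_one_add_cosh_atTop :
    Tendsto (fun χ => cosh χ * log (sinh χ / (1 + cosh χ))) atTop (𝓝 (-1)) := by
  have hderiv : HasDerivAt (fun t => log ((1 - t) / (1 + t))) (-2) 0 := by
    have hq : HasDerivAt (fun t : ℝ => (1 - t) / (1 + t))
        ((-1 * (1 + 0) - (1 - 0) * 1) / (1 + 0) ^ 2) 0 :=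
      ((hasDerivAt_id' 0).const_sub 1).div ((hasDerivAt_id' 0).const_add 1) (by norm_num)
    convert hq.log (by norm_num) using 1
    norm_num
  have hslope := (hasDerivAt_iff_tendsto_slope_zero.mp hderiv).comp
    (tendsto_nhdsWithin_of_tendsto_nhds_of_eventually_within _
      tendsto_exp_neg_atTop_nhds_zero (Eventually.of_forall fun χ => exp_ne_zero (-χ)))
  have hfactor : Tendsto (fun χ => (1 + exp (-χ) ^ 2) / 2) atTop (𝓝 ((1 + 0 ^ 2) / 2)) :=
    ((tendsto_exp_neg_atTop_nhds_zero.pow 2).const_add 1).div_const 2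
  convert hfactor.mul hslope using 1
  · ext χ
    rw [Function.comp_apply, sinh_div_one_add_cosh_eq, cosh_eq_exp_neg]
    simp only [zero_add, add_zero, sub_zero, div_one, log_one, smul_eq_mul]
    ring
  · norm_num

lemma tendsto_greenProfile_atTop : Tendsto greenProfile atTop (𝓝 0) := by
  have h := tendsto_cosh_mul_log_sinh_div_one_add_cosh_atTop.const_add 1
  rwa [add_neg_cancel] at h

lemma continuous_sinh_sq_mul_log_sinh_div_one_add_cosh :
    Continuous fun x => sinh x ^ 2 * log (sinh x / (1 + cosh x)) := by
  have h : (fun x => sinh x ^ 2 * log (sinh x / (1 + cosh x))) =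
      fun x => sinh x * (sinh x * log (sinh x)) - sinh x ^ 2 * log (1 + cosh x) := by
    ext x
    rcases eq_or_ne (sinh x) 0 with hs | hs
    · simp [hs]
    · rw [log_div hs (one_add_cosh_pos x).ne']
      ring
  rw [h]
  have hlog : Continuous fun x => log (1 + cosh x) :=
    (continuous_const.add continuous_cosh).log fun x => (one_add_cosh_pos x).ne'
  fun_prop

lemma tendsto_sinh_mul_deriv_greenProfile_nhdsNE_zero :
    Tendsto (fun χ => sinh χ * deriv greenProfile χ) (𝓝[≠] 0) (𝓝 1) := by
  have hF : Tendsto (fun x => sinh x ^ 2 * log (sinh x / (1 + cosh x)) + cosh x) (𝓝 0)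
      (𝓝 (sinh 0 ^ 2 * log (sinh 0 / (1 + cosh 0)) + cosh 0)) :=
    (continuous_sinh_sq_mul_log_sinh_div_one_add_cosh.add continuous_cosh).tendsto 0
  rw [sinh_zero, cosh_zero] at hF
  refine (tendsto_nhdsWithin_of_tendsto_nhds (by simpa using hF)).congr' ?_
  filter_upwards [self_mem_nhdsWithin] with x hx
  exact (sinh_mul_deriv_greenProfile hx).symm

/-- The Dirichlet Green's function of `D² - (d-2)/l²` on the Rindler horizon for `d = 4`:
`G(χ) = -(1/2π)(1 + cosh χ · ln(sinh χ / (1 + cosh χ)))` satisfies the radial ODE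
`(sinh χ · G')' = 2 sinh χ · G` for `χ > 0`, vanishes as `χ → ∞`, and has the
delta-function normalization `lim_{χ→0⁺} 2π sinh χ · G'(χ) = -1`. -/
theorem greens_function_rindler_d4 (G : ℝ → ℝ)
    (hG : ∀ χ : ℝ, G χ = -(1 / (2 * π)) *
      (1 + Real.cosh χ * Real.log (Real.sinh χ / (1 + Real.cosh χ)))) :
    (∀ χ : ℝ, 0 < χ →
      deriv (fun x => Real.sinh x * deriv G x) χ = 2 * Real.sinh χ * G χ) ∧
    Tendsto G atTop (nhds 0) ∧
    Tendsto (fun χ => 2 * π * Real.sinh χ * deriv G χ)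
      (nhdsWithin 0 (Set.Ioi 0)) (nhds (-1)) := by
  have hG' : G = fun χ => -(1 / (2 * π)) * greenProfile χ := funext hG
  have hsinh_deriv : (fun x => sinh x * deriv G x) =
      fun x => -(1 / (2 * π)) * (sinh x * deriv greenProfile x) := by
    ext x
    rw [hG', deriv_const_mul_field']
    ring
  refine ⟨fun χ hχ => ?_, ?_, ?_⟩
  · rw [hsinh_deriv, ((hasDerivAt_sinh_mul_deriv_greenProfile hχ.ne').const_mul _).deriv, hG']
    ring
  · simpa [hG'] using tendsto_greenProfile_atTop.const_mul (-(1 / (2 * π)))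
  · have hlim := (tendsto_sinh_mul_deriv_greenProfile_nhdsNE_zero.mono_left
      (nhdsGT_le_nhdsNE 0)).neg
    refine hlim.congr fun x => ?_
    have hx := congrFun hsinh_deriv x
    rw [mul_assoc, hx]
    field_simp [pi_ne_zero]
end

section
/- (Green's function on the Rindler horizon, d = 5.) Fix l > 0 and define G : (0,∞) → ℝ by G(χ) = e^{−2χ} / (4π · l · sinh(χ)). Then: (i) for all χ > 0, (d/dχ)(sinh²(χ) · G′(χ)) = 3 · sinh²(χ) · G(χ); (ii) G(χ) → 0 as χ → ∞; (iii) lim_{χ→0⁺} 4π · l · sinh²(χ) · G′(χ) = −1. -/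
open Real Filter Topology

/-!
Away from `χ = 0` the flux `sinh² χ · G'(χ)` equals `-e^{-2χ} (2 sinh χ + cosh χ) / (4π l)`,
which extends smoothly through `χ = 0`. Its derivative is `3 e^{-2χ} sinh χ / (4π l) = 3 sinh² χ · G`,
and its value at `0` is `-1 / (4π l)`, which gives the normalization.
-/

noncomputable def rindlerGreen (c χ : ℝ) : ℝ := exp (-2 * χ) / (c * sinh χ)

noncomputable def rindlerFlux (c χ : ℝ) : ℝ := -(exp (-2 * χ) * (2 * sinh χ + cosh χ)) / c

lemma hasDerivAt_exp_neg_two_mul (χ : ℝ) :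
    HasDerivAt (fun x => exp (-2 * x)) (-2 * exp (-2 * χ)) χ := by
  simpa [mul_comm] using ((hasDerivAt_id χ).const_mul (-2 : ℝ)).exp

lemma hasDerivAt_rindlerFlux (c χ : ℝ) :
    HasDerivAt (rindlerFlux c) (3 * exp (-2 * χ) * sinh χ / c) χ := by
  have h : HasDerivAt (rindlerFlux c)
      (-(-2 * exp (-2 * χ) * (2 * sinh χ + cosh χ) + exp (-2 * χ) * (2 * cosh χ + sinh χ)) / c) χ :=
    (((hasDerivAt_exp_neg_two_mul χ).mul
      (((hasDerivAt_sinh χ).const_mul 2).add (hasDerivAt_cosh χ))).neg).div_const c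
  convert h using 1
  ring

lemma tendsto_sinh_atTop : Tendsto sinh atTop atTop :=
  tendsto_atTop_mono' atTop ((eventually_ge_atTop 0).mono fun _ hx => self_le_sinh_iff.mpr hx)
    tendsto_id

theorem tendsto_rindlerGreen_atTop (c : ℝ) : Tendsto (rindlerGreen c) atTop (𝓝 0) := by
  have hexp : Tendsto (fun χ : ℝ => exp (-2 * χ)) atTop (𝓝 0) :=
    tendsto_exp_atBot.comp (tendsto_id.const_mul_atTop_of_neg (by norm_num))
  have h := (hexp.div_atTop tendsto_sinh_atTop).div_const c
  rw [zero_div] at h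
  refine h.congr fun χ => ?_
  rw [rindlerGreen, div_mul_eq_div_div_swap]

section

variable {c : ℝ}

lemma hasDerivAt_rindlerGreen (hc : c ≠ 0) {χ : ℝ} (hχ : χ ≠ 0) :
    HasDerivAt (rindlerGreen c)
      ((-2 * exp (-2 * χ) * (c * sinh χ) - exp (-2 * χ) * (c * cosh χ)) / (c * sinh χ) ^ 2) χ :=
  (hasDerivAt_exp_neg_two_mul χ).div ((hasDerivAt_sinh χ).const_mul c)
    (mul_ne_zero hc (sinh_ne_zero.mpr hχ))

lemma sinh_sq_mul_deriv_rindlerGreen (hc : c ≠ 0) {χ : ℝ} (hχ : χ ≠ 0) :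
    sinh χ ^ 2 * deriv (rindlerGreen c) χ = rindlerFlux c χ := by
  have hs : sinh χ ≠ 0 := sinh_ne_zero.mpr hχ
  rw [(hasDerivAt_rindlerGreen hc hχ).deriv, rindlerFlux]
  field_simp
  ring

theorem deriv_sinh_sq_mul_deriv_rindlerGreen (hc : c ≠ 0) {χ : ℝ} (hχ : χ ≠ 0) :
    deriv (fun x => sinh x ^ 2 * deriv (rindlerGreen c) x) χ =
      3 * sinh χ ^ 2 * rindlerGreen c χ := by
  have hflux : (fun x => sinh x ^ 2 * deriv (rindlerGreen c) x) =ᶠ[𝓝 χ] rindlerFlux c := by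
    filter_upwards [eventually_ne_nhds hχ] with x hx using sinh_sq_mul_deriv_rindlerGreen hc hx
  have hs : sinh χ ≠ 0 := sinh_ne_zero.mpr hχ
  rw [hflux.deriv_eq, (hasDerivAt_rindlerFlux c χ).deriv, rindlerGreen]
  field_simp

theorem tendsto_mul_sinh_sq_mul_deriv_rindlerGreen (hc : c ≠ 0) :
    Tendsto (fun χ => c * sinh χ ^ 2 * deriv (rindlerGreen c) χ) (𝓝[>] 0) (𝓝 (-1)) := by
  have hflux : Tendsto (fun χ => c * rindlerFlux c χ) (𝓝[>] 0) (𝓝 (-1)) := by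
    have h : ContinuousAt (fun χ => c * rindlerFlux c χ) 0 := by unfold rindlerFlux; fun_prop
    have h0 : c * rindlerFlux c 0 = -1 := by
      simp only [rindlerFlux, mul_zero, exp_zero, sinh_zero, cosh_zero]
      field_simp
      norm_num
    exact h0 ▸ h.tendsto.mono_left nhdsWithin_le_nhds
  refine hflux.congr' ?_
  filter_upwards [self_mem_nhdsWithin] with x hx
  rw [mul_assoc, sinh_sq_mul_deriv_rindlerGreen hc hx.ne']

end

/-- The Dirichlet Green's function of `D² - (d-2)/l²` on the Rindler horizon for `d = 5`:
`G(χ) = e^{-2χ}/(4π l sinh χ)` satisfies the radial ODE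
`(sinh² χ · G')' = 3 sinh² χ · G` for `χ > 0`, vanishes as `χ → ∞`, and has the
delta-function normalization `lim_{χ→0⁺} 4π l sinh² χ · G'(χ) = -1`. -/
theorem greens_function_rindler_d5 (l : ℝ) (hl : 0 < l) (G : ℝ → ℝ)
    (hG : ∀ χ : ℝ, G χ = Real.exp (-2 * χ) / (4 * π * l * Real.sinh χ)) :
    (∀ χ : ℝ, 0 < χ →
      deriv (fun x => Real.sinh x ^ 2 * deriv G x) χ = 3 * Real.sinh χ ^ 2 * G χ) ∧
    Tendsto G atTop (nhds 0) ∧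
    Tendsto (fun χ => 4 * π * l * Real.sinh χ ^ 2 * deriv G χ)
      (nhdsWithin 0 (Set.Ioi 0)) (nhds (-1)) := by
  obtain rfl : G = rindlerGreen (4 * π * l) := funext hG
  have hc : 4 * π * l ≠ 0 := by positivity
  exact ⟨fun χ hχ => deriv_sinh_sq_mul_deriv_rindlerGreen hc hχ.ne',
    tendsto_rindlerGreen_atTop _, tendsto_mul_sinh_sq_mul_deriv_rindlerGreen hc⟩
end

section
/- (Positivity of the d = 6 Green's function.) For all χ > 0, 2 + coth²(χ) + 3 cosh(χ) · ln(sinh(χ)/(1 + cosh(χ))) ≥ 0; equivalently, the function G(χ) = (1/(4π² l²)) · (2 + coth²(χ) + 3 cosh(χ) · ln(sinh(χ)/(1 + cosh(χ)))) is nonnegative on (0,∞) for any l > 0. -/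
/-!
With `x = -log tanh (χ/2) ≥ 0` one has `sinh χ · sinh x = 1` and `coth χ = cosh x`, so the
bracket equals `sinh χ · (sinh x (2 + cosh² x) - 3 x cosh x)`. The second factor vanishes at
`x = 0` and has derivative `(3/2) sinh x (sinh 2x - 2x) ≥ 0`.
-/

open Real

lemma sinh_mul_sinh_two_mul_sub_nonneg (x : ℝ) : 0 ≤ sinh x * (sinh (2 * x) - 2 * x) := by
  rcases le_total 0 x with hx | hx
  · exact mul_nonneg (sinh_nonneg_iff.2 hx) (sub_nonneg.2 (self_le_sinh_iff.2 (by linarith)))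
  · exact mul_nonneg_of_nonpos_of_nonpos (sinh_nonpos_iff.2 hx)
      (sub_nonpos.2 (sinh_le_self_iff.2 (by linarith)))

lemma hasDerivAt_sinh_mul_two_add_cosh_sq_sub (x : ℝ) :
    HasDerivAt (fun x => sinh x * (2 + cosh x ^ 2) - 3 * x * cosh x)
      (3 / 2 * (sinh x * (sinh (2 * x) - 2 * x))) x := by
  have h := ((hasDerivAt_sinh x).mul (((hasDerivAt_cosh x).pow 2).const_add 2)).sub
    (((hasDerivAt_id x).const_mul 3).mul (hasDerivAt_cosh x))
  refine h.congr_deriv ?_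
  rw [sinh_two_mul]
  norm_num
  linear_combination cosh x * cosh_sq x

lemma three_mul_mul_cosh_le_sinh_mul_two_add_cosh_sq {x : ℝ} (hx : 0 ≤ x) :
    3 * x * cosh x ≤ sinh x * (2 + cosh x ^ 2) := by
  have hmono := monotone_of_hasDerivAt_nonneg hasDerivAt_sinh_mul_two_add_cosh_sq_sub
    fun x => mul_nonneg (by norm_num) (sinh_mul_sinh_two_mul_sub_nonneg x)
  simpa using hmono hx

/- `sinh χ / (1 + cosh χ) = tanh (χ/2)`, and `χ ↦ -log tanh (χ/2)` is the involution of `(0, ∞)`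
characterised by `sinh χ · sinh χ' = 1`. -/

lemma sinh_mul_sinh_neg_log_tanh_half {χ : ℝ} (hχ : 0 < χ) :
    sinh χ * sinh (-log (sinh χ / (1 + cosh χ))) = 1 := by
  have hs : 0 < sinh χ := sinh_pos_iff.2 hχ
  have hc : 0 < 1 + cosh χ := by linarith [one_le_cosh χ]
  rw [sinh_neg, sinh_log (div_pos hs hc)]
  field_simp
  linear_combination cosh_sq' χ

lemma sinh_mul_cosh_neg_log_tanh_half {χ : ℝ} (hχ : 0 < χ) :
    sinh χ * cosh (-log (sinh χ / (1 + cosh χ))) = cosh χ := by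
  have hs : 0 < sinh χ := sinh_pos_iff.2 hχ
  have hc : 0 < 1 + cosh χ := by linarith [one_le_cosh χ]
  rw [cosh_neg, cosh_log (div_pos hs hc)]
  field_simp
  linear_combination (-1) * cosh_sq' χ

lemma neg_log_tanh_half_nonneg {χ : ℝ} (hχ : 0 < χ) :
    0 ≤ -log (sinh χ / (1 + cosh χ)) := by
  have hs : 0 < sinh χ := sinh_pos_iff.2 hχ
  have hsc : sinh χ < 1 + cosh χ := by nlinarith [cosh_sq' χ, one_le_cosh χ]
  exact neg_nonneg.2 (log_nonpos (div_pos hs (by linarith)).le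
    ((div_le_one (by linarith)).2 hsc.le))

/-- Positivity of the `d = 6` Green's function on the Rindler horizon: for all `χ > 0`,
`2 + coth² χ + 3 cosh χ · ln(sinh χ/(1+cosh χ)) ≥ 0`; equivalently
`G(χ) = (1/(4π²l²))(2 + coth² χ + 3 cosh χ · ln(sinh χ/(1+cosh χ)))` is nonnegative on
`(0,∞)` for any `l > 0`. -/
theorem greens_function_d6_nonneg :
    ∀ χ : ℝ, 0 < χ →
      (0 ≤ 2 + (Real.cosh χ / Real.sinh χ) ^ 2 +
        3 * Real.cosh χ * Real.log (Real.sinh χ / (1 + Real.cosh χ))) ∧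
      ∀ l : ℝ, 0 < l →
        0 ≤ (1 / (4 * π ^ 2 * l ^ 2)) *
          (2 + (Real.cosh χ / Real.sinh χ) ^ 2 +
            3 * Real.cosh χ * Real.log (Real.sinh χ / (1 + Real.cosh χ))) := by
  intro χ hχ
  have hs : 0 < sinh χ := sinh_pos_iff.2 hχ
  set x := -log (sinh χ / (1 + cosh χ)) with hx
  have hsinh : sinh χ * sinh x = 1 := sinh_mul_sinh_neg_log_tanh_half hχ
  have hcosh : sinh χ * cosh x = cosh χ := sinh_mul_cosh_neg_log_tanh_half hχ
  have hlog : log (sinh χ / (1 + cosh χ)) = -x := by rw [hx, neg_neg]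
  have hG : 2 + (cosh χ / sinh χ) ^ 2 + 3 * cosh χ * log (sinh χ / (1 + cosh χ)) =
      sinh χ * (sinh x * (2 + cosh x ^ 2) - 3 * x * cosh x) := by
    rw [hlog, ← hcosh, mul_div_cancel_left₀ _ hs.ne']
    linear_combination -(2 + cosh x ^ 2) * hsinh
  have hG_nonneg :
      0 ≤ 2 + (cosh χ / sinh χ) ^ 2 + 3 * cosh χ * log (sinh χ / (1 + cosh χ)) := by
    rw [hG]
    exact mul_nonneg hs.le (sub_nonneg.2
      (three_mul_mul_cosh_le_sinh_mul_two_add_cosh_sq (neg_log_tanh_half_nonneg hχ)))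
  exact ⟨hG_nonneg, fun l _ => mul_nonneg (by positivity) hG_nonneg⟩
end

section
/- (Green's function on the Rindler horizon, d = 7.) Fix l > 0 and define G : (0,∞) → ℝ by G(χ) = e^{−3χ} · (3 + coth(χ)) / (8π² · l³ · sinh²(χ)). Then: (i) for all χ > 0, (d/dχ)(sinh⁴(χ) · G′(χ)) = 5 · sinh⁴(χ) · G(χ); (ii) G(χ) → 0 as χ → ∞; (iii) lim_{χ→0⁺} (8π²/3) · l³ · sinh⁴(χ) · G′(χ) = −1. -/
/-!
Up to the constant `8π²l³`, the Green's function is `F(χ) = e^{-3χ}(3 + coth χ)/sinh² χ`, whose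
flux `sinh⁴ χ · F'(χ)` is `H(χ) = e^{-3χ}(-8 sinh² χ - 9 sinh χ cosh χ - 3 cosh² χ)`, smooth on all of `ℝ`.
Differentiating once more gives `H' = 5 sinh⁴ F`, which is the radial equation; continuity of `H`
with `H(0) = -3` gives the normalization; and `F → 0` at infinity because `coth χ → 1` while
`sinh χ → ∞`.
-/

open Real Filter Topology

noncomputable section

namespace RindlerGreen

def profile (χ : ℝ) : ℝ :=
  exp (-3 * χ) * (3 + cosh χ / sinh χ) / sinh χ ^ 2

def flux (χ : ℝ) : ℝ :=
  exp (-3 * χ) * (-8 * sinh χ ^ 2 - 9 * (sinh χ * cosh χ) - 3 * cosh χ ^ 2)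

theorem hasDerivAt_exp_neg_three_mul (χ : ℝ) :
    HasDerivAt (fun x => exp (-3 * x)) (-3 * exp (-3 * χ)) χ := by
  simpa [mul_comm] using ((hasDerivAt_id χ).const_mul (-3)).exp

theorem hasDerivAt_profile {χ : ℝ} (hχ : χ ≠ 0) :
    HasDerivAt profile (flux χ / sinh χ ^ 4) χ := by
  have hs : sinh χ ≠ 0 := sinh_ne_zero.2 hχ
  have hcoth := ((hasDerivAt_cosh χ).div (hasDerivAt_sinh χ) hs).const_add 3
  have hsq := (hasDerivAt_sinh χ).pow 2
  refine (((hasDerivAt_exp_neg_three_mul χ).mul hcoth).div hsq (pow_ne_zero 2 hs)).congr_deriv ?_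
  simp only [flux, Pi.div_apply, Pi.pow_apply, Pi.mul_apply]
  field_simp
  ring

theorem hasDerivAt_flux {χ : ℝ} (hχ : χ ≠ 0) :
    HasDerivAt flux (5 * sinh χ ^ 4 * profile χ) χ := by
  have hsinh : sinh χ ≠ 0 := sinh_ne_zero.2 hχ
  have hs := hasDerivAt_sinh χ
  have hc := hasDerivAt_cosh χ
  have hpoly := (((hs.pow 2).const_mul (-8)).sub ((hs.mul hc).const_mul 9)).sub
    ((hc.pow 2).const_mul 3)
  refine ((hasDerivAt_exp_neg_three_mul χ).mul hpoly).congr_deriv ?_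
  simp only [profile, Pi.sub_apply, Pi.pow_apply, Pi.mul_apply]
  field_simp
  ring

theorem sinh_pow_four_mul_deriv_profile {χ : ℝ} (hχ : χ ≠ 0) :
    sinh χ ^ 4 * deriv profile χ = flux χ := by
  have hs : sinh χ ≠ 0 := sinh_ne_zero.2 hχ
  rw [(hasDerivAt_profile hχ).deriv]
  field_simp

theorem deriv_sinh_pow_four_mul_deriv_profile {χ : ℝ} (hχ : χ ≠ 0) :
    deriv (fun x => sinh x ^ 4 * deriv profile x) χ = 5 * sinh χ ^ 4 * profile χ := by
  have hflux : (fun x => sinh x ^ 4 * deriv profile x) =ᶠ[𝓝 χ] flux :=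
    eventually_ne_nhds hχ |>.mono fun x hx => sinh_pow_four_mul_deriv_profile hx
  rw [hflux.deriv_eq, (hasDerivAt_flux hχ).deriv]

theorem tendsto_sinh_atTop : Tendsto sinh atTop atTop :=
  tendsto_atTop_mono' atTop ((eventually_ge_atTop 0).mono fun _ => self_le_sinh_iff.2) tendsto_id

-- `coth χ = 1 + e^{-χ}/sinh χ`, since `cosh χ - sinh χ = e^{-χ}`.
theorem tendsto_coth_atTop : Tendsto (fun x => cosh x / sinh x) atTop (𝓝 1) := by
  have hlim := (tendsto_exp_neg_atTop_nhds_zero.mul tendsto_sinh_atTop.inv_tendsto_atTop).const_add 1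
  rw [mul_zero, add_zero] at hlim
  simp only [Pi.inv_apply] at hlim
  refine hlim.congr' ((eventually_gt_atTop 0).mono fun x hx => ?_)
  have hs : sinh x ≠ 0 := (sinh_pos_iff.2 hx).ne'
  rw [← cosh_sub_sinh]
  field_simp
  ring

theorem tendsto_profile_atTop : Tendsto profile atTop (𝓝 0) := by
  have hexp : Tendsto (fun x : ℝ => exp (-3 * x)) atTop (𝓝 0) :=
    tendsto_exp_comp_nhds_zero.2 (tendsto_id.const_mul_atTop_of_neg (by norm_num))
  have hsq : Tendsto (fun x => (sinh x ^ 2)⁻¹) atTop (𝓝 0) :=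
    ((tendsto_pow_atTop two_ne_zero).comp tendsto_sinh_atTop).inv_tendsto_atTop
  rw [← mul_zero (0 * (3 + 1))]
  refine ((hexp.mul (tendsto_coth_atTop.const_add 3)).mul hsq).congr fun x => ?_
  simp only [profile, div_eq_mul_inv]

theorem tendsto_sinh_pow_four_mul_deriv_profile_zero :
    Tendsto (fun x => sinh x ^ 4 * deriv profile x) (𝓝[>] 0) (𝓝 (-3)) := by
  have hcont : Continuous flux := by unfold flux; fun_prop
  have hlim : Tendsto flux (𝓝[>] 0) (𝓝 (-3)) := by
    simpa [flux] using (hcont.tendsto 0).mono_left nhdsWithin_le_nhds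
  exact hlim.congr' (eventually_nhdsWithin_of_forall fun x hx =>
    (sinh_pow_four_mul_deriv_profile (ne_of_gt hx)).symm)

end RindlerGreen

end

open RindlerGreen in
/-- The Dirichlet Green's function of `D² - (d-2)/l²` on the Rindler horizon for `d = 7`:
`G(χ) = e^{-3χ}(3 + coth χ)/(8π² l³ sinh² χ)` satisfies the radial ODE
`(sinh⁴ χ · G')' = 5 sinh⁴ χ · G` for `χ > 0`, vanishes as `χ → ∞`, and has the
delta-function normalization `lim_{χ→0⁺} (8π²/3) l³ sinh⁴ χ · G'(χ) = -1`. -/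
theorem greens_function_rindler_d7 (l : ℝ) (hl : 0 < l) (G : ℝ → ℝ)
    (hG : ∀ χ : ℝ, G χ = Real.exp (-3 * χ) * (3 + Real.cosh χ / Real.sinh χ) /
      (8 * π ^ 2 * l ^ 3 * Real.sinh χ ^ 2)) :
    (∀ χ : ℝ, 0 < χ →
      deriv (fun x => Real.sinh x ^ 4 * deriv G x) χ = 5 * Real.sinh χ ^ 4 * G χ) ∧
    Tendsto G atTop (nhds 0) ∧
    Tendsto (fun χ => (8 * π ^ 2 / 3) * l ^ 3 * Real.sinh χ ^ 4 * deriv G χ)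
      (nhdsWithin 0 (Set.Ioi 0)) (nhds (-1)) := by
  set c := 8 * π ^ 2 * l ^ 3
  have hc : c ≠ 0 := by positivity
  have hGc : G = fun x => profile x / c := funext fun x => by
    rw [hG, profile, div_mul_eq_div_div_swap]
  have hG' : deriv G = fun x => deriv profile x / c := by
    ext x; rw [hGc, deriv_div_const]
  refine ⟨fun χ hχ => ?_, ?_, ?_⟩
  · simp only [hG', mul_div_assoc']
    rw [deriv_div_const, deriv_sinh_pow_four_mul_deriv_profile hχ.ne', hGc, mul_div_assoc]
  · rw [hGc, ← zero_div c]
    exact tendsto_profile_atTop.div_const c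
  · have hlim := tendsto_sinh_pow_four_mul_deriv_profile_zero.div_const 3
    rw [show (-3 : ℝ) / 3 = -1 by norm_num] at hlim
    refine hlim.congr fun x => ?_
    rw [hG']
    field_simp
    ring
end
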